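/- arXiv:math/0502013 — 11 statements merged into one kernel-verified Lean document; each statement's English description precedes it below -/
import Mathlib

section
/- Let (X, ‖·‖, ‖·‖_L) be a Lip-space, let X₀ = {x ∈ X : ‖x‖_L < ∞}, and let e ∈ X₀ with e ≠ 0. Define L(x) = inf_{λ∈ℝ} ‖x − λe‖_L ∈ [0,∞]. Then L is lower semicontinuous with respect to the norm ‖·‖: for every sequence (x_n) in X with ‖x_n − x‖ → 0 one has L(x) ≤ liminf_{n→∞} L(x_n). -/
open scoped ENNReal

/-- A Lip-space: a real Banach space `X` together with an extended-real-valued "Lip-norm"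
`lipNorm : X → [0,∞]` which is finite on a dense linear subspace on which it is a norm
(subadditive, absolutely homogeneous, vanishing only at `0`), and whose unit ball
`{x : X | lipNorm x ≤ 1}` is compact in the norm topology of `X`. -/
structure LipSpace (X : Type*) [NormedAddCommGroup X] [NormedSpace ℝ X] [CompleteSpace X] where
  lipNorm : X → ℝ≥0∞
  lipNorm_add_le : ∀ x y : X, lipNorm (x + y) ≤ lipNorm x + lipNorm y
  lipNorm_smul : ∀ (c : ℝ) (x : X), lipNorm (c • x) = (‖c‖₊ : ℝ≥0∞) * lipNorm x
  lipNorm_eq_zero : ∀ x : X, lipNorm x = 0 → x = 0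
  dense_finite : Dense {x : X | lipNorm x < ⊤}
  isCompact_unitBall : IsCompact {x : X | lipNorm x ≤ 1}

lemma LipSpace.isCompact_sublevel {X : Type*} [NormedAddCommGroup X] [NormedSpace ℝ X]
    [CompleteSpace X] (S : LipSpace X) {t : ℝ≥0∞} (ht0 : t ≠ 0) (ht : t ≠ ⊤) :
    IsCompact {x : X | S.lipNorm x ≤ t} := by
  have htR : (0:ℝ) < t.toReal := ENNReal.toReal_pos ht0 ht
  have hcoe : (‖t.toReal‖₊ : ℝ≥0∞) = t := by
    rw [Real.nnnorm_of_nonneg htR.le]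
    exact ENNReal.coe_toNNReal ht
  have hcomp := S.isCompact_unitBall.image
    (continuous_const_smul t.toReal : Continuous fun x : X => t.toReal • x)
  have hset : (fun x : X => t.toReal • x) '' {x : X | S.lipNorm x ≤ 1}
      = {x : X | S.lipNorm x ≤ t} := by
    ext w
    constructor
    · rintro ⟨v, hv, rfl⟩
      have : S.lipNorm (t.toReal • v) = t * S.lipNorm v := by
        rw [S.lipNorm_smul, hcoe]
      simpa [this] using mul_le_mul_right hv t |>.trans (by simp)
    · intro hw
      refine ⟨t.toReal⁻¹ • w, ?_, ?_⟩
      · have h1 : S.lipNorm (t.toReal⁻¹ • w) = t⁻¹ * S.lipNorm w := by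
          rw [S.lipNorm_smul]
          congr 1
          rw [nnnorm_inv]
          rw [ENNReal.coe_inv (nnnorm_ne_zero_iff.mpr htR.ne')]
          rw [hcoe]
        have : t⁻¹ * S.lipNorm w ≤ t⁻¹ * t := mul_le_mul_right hw _
        rw [ENNReal.inv_mul_cancel ht0 ht] at this
        simpa [h1] using this
      · exact smul_inv_smul₀ htR.ne' w
  rwa [hset] at hcomp

/-- With `L x = ⨅ λ ∈ ℝ, ‖x - λ • e‖_L` as above, `L` is lower
semicontinuous with respect to the norm of `X`: if `‖x_n − x‖ → 0` then
`L x ≤ liminf_n L (x_n)`. -/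
theorem stmt1 {X : Type*} [NormedAddCommGroup X] [NormedSpace ℝ X] [CompleteSpace X]
    (S : LipSpace X) (e : X) (he : S.lipNorm e < ⊤) (he0 : e ≠ 0)
    (x : ℕ → X) (y : X) (hxy : Filter.Tendsto x Filter.atTop (nhds y)) :
    (⨅ l : ℝ, S.lipNorm (y - l • e)) ≤
      Filter.liminf (fun n => ⨅ l : ℝ, S.lipNorm (x n - l • e)) Filter.atTop := by
  set c := Filter.liminf (fun n => ⨅ l : ℝ, S.lipNorm (x n - l • e)) Filter.atTop with hc
  refine ENNReal.le_of_forall_pos_le_add fun ε hε hcT => ?_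
  have hlt : c < c + ε := ENNReal.lt_add_right hcT.ne (by exact_mod_cast hε.ne')
  have hfreq : ∃ᶠ n in Filter.atTop, (⨅ l : ℝ, S.lipNorm (x n - l • e)) < c + ε :=
    Filter.frequently_lt_of_liminf_lt (by isBoundedDefault) hlt
  obtain ⟨φ, hφ, hφlt⟩ := Filter.extraction_of_frequently_atTop hfreq
  choose l hl using fun k => (iInf_lt_iff.mp (hφlt k))
  set z : ℕ → X := fun k => x (φ k) - l k • e with hz
  have hK : IsCompact {w : X | S.lipNorm w ≤ c + ε} :=
    S.isCompact_sublevel (((ENNReal.coe_pos.mpr hε).trans_le le_add_self).ne') (by simp [hcT.ne, ENNReal.coe_ne_top])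
  have hzK : ∀ k, z k ∈ {w : X | S.lipNorm w ≤ c + ε} := fun k => (hl k).le
  obtain ⟨a, ha, ψ, hψ, hza⟩ := hK.tendsto_subseq hzK
  have hxsub : Filter.Tendsto (fun j => x (φ (ψ j))) Filter.atTop (nhds y) :=
    hxy.comp ((hφ.comp hψ).tendsto_atTop)
  have hle : Filter.Tendsto (fun j => l (ψ j) • e) Filter.atTop (nhds (y - a)) := by
    have : (fun j => l (ψ j) • e) = fun j => x (φ (ψ j)) - z (ψ j) := by
      funext j; simp [hz]
    rw [this]
    exact hxsub.sub hza
  have hspan : IsClosed ((Submodule.span ℝ {e} : Submodule ℝ X) : Set X) :=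
    (Submodule.span ℝ {e}).closed_of_finiteDimensional
  have hmem : y - a ∈ Submodule.span ℝ {e} := by
    refine hspan.mem_of_tendsto hle (Filter.Eventually.of_forall fun j => ?_)
    exact Submodule.smul_mem _ _ (Submodule.mem_span_singleton_self e)
  obtain ⟨lam, hlam⟩ := Submodule.mem_span_singleton.mp hmem
  have hya : y - lam • e = a := by rw [hlam]; abel
  calc (⨅ l : ℝ, S.lipNorm (y - l • e)) ≤ S.lipNorm (y - lam • e) := iInf_le _ lam
    _ = S.lipNorm a := by rw [hya]
    _ ≤ c + ε := ha
end

section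
/- Let (X, ‖·‖, ‖·‖_L) be a Lip-space and let X' be the Banach dual of (X, ‖·‖) with dual norm ‖·‖'. For ξ, η ∈ X' set d(ξ,η) = sup_{x : ‖x‖_L ≤ 1} |ξ(x) − η(x)| (a finite-valued metric on X'). Then on the closed unit ball B₁' = {ξ ∈ X' : ‖ξ‖' ≤ 1} the topology induced by the metric d coincides with the weak* topology; equivalently, the identity map from B₁' with the (subspace) weak* topology to B₁' with the metric d is a homeomorphism. -/
open scoped ENNReal

/-!
Every ξ in the dual unit ball is 1-Lipschitz, so on the compact set K = {‖x‖_L ≤ 1} a finite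
δ-net turns closeness of two such functionals at the points of the net into uniform closeness
on K: the d-balls are weak*-open. Conversely the cone ℝ·K contains the dense set where ‖·‖_L is finite,
and |ξ x - η x| ≤ 2‖x - c • y‖ + |c| d(ξ, η) for y ∈ K, so evaluations are d-continuous.
-/

open Bornology Topology TopologicalSpace
open scoped Pointwise

section SupDist

variable {X : Type*} [NormedAddCommGroup X] [NormedSpace ℝ X] {K : Set X}

noncomputable def supDist (K : Set X) (ξ η : X →L[ℝ] ℝ) : ℝ :=
  ⨆ x : K, |ξ x - η x|

theorem supDist_nonneg (ξ η : X →L[ℝ] ℝ) : 0 ≤ supDist K ξ η :=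
  Real.iSup_nonneg fun _ => abs_nonneg _

theorem supDist_self (ξ : X →L[ℝ] ℝ) : supDist K ξ ξ = 0 := by
  simp [supDist]

theorem supDist_le {ξ η : X →L[ℝ] ℝ} {r : ℝ} (hr : 0 ≤ r) (h : ∀ x ∈ K, |ξ x - η x| ≤ r) :
    supDist K ξ η ≤ r :=
  Real.iSup_le (fun x => h x x.2) hr

theorem abs_apply_sub_le_supDist (hK : IsBounded K) (ξ η : X →L[ℝ] ℝ) {x : X} (hx : x ∈ K) :
    |ξ x - η x| ≤ supDist K ξ η := by
  obtain ⟨M, hM⟩ := hK.exists_norm_le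
  refine le_ciSup (f := fun y : K => |ξ y - η y|) ⟨‖ξ - η‖ * M, ?_⟩ ⟨x, hx⟩
  rintro _ ⟨y, rfl⟩
  calc |ξ y - η y| = ‖(ξ - η) y‖ := rfl
    _ ≤ ‖ξ - η‖ * ‖(y : X)‖ := (ξ - η).le_opNorm y
    _ ≤ ‖ξ - η‖ * M := by gcongr; exact hM y y.2

theorem supDist_triangle (hK : IsBounded K) (ξ η ζ : X →L[ℝ] ℝ) :
    supDist K ξ ζ ≤ supDist K ξ η + supDist K η ζ :=
  supDist_le (add_nonneg (supDist_nonneg ξ η) (supDist_nonneg η ζ)) fun _ hx =>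
    (abs_sub_le _ _ _).trans <|
      add_le_add (abs_apply_sub_le_supDist hK ξ η hx) (abs_apply_sub_le_supDist hK η ζ hx)

theorem abs_apply_smul_sub_le (hK : IsBounded K) (ξ η : X →L[ℝ] ℝ) (c : ℝ) {y : X}
    (hy : y ∈ K) : |ξ (c • y) - η (c • y)| ≤ |c| * supDist K ξ η := by
  rw [map_smul, map_smul, smul_eq_mul, smul_eq_mul, ← mul_sub, abs_mul]
  gcongr
  exact abs_apply_sub_le_supDist hK ξ η hy

theorem abs_apply_sub_apply_le {ξ : X →L[ℝ] ℝ} (hξ : ‖ξ‖ ≤ 1) (x y : X) : |ξ x - ξ y| ≤ dist x y :=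
  calc |ξ x - ξ y| = ‖ξ (x - y)‖ := by rw [map_sub]; rfl
    _ ≤ ‖ξ‖ * ‖x - y‖ := ξ.le_opNorm _
    _ ≤ dist x y := by rw [dist_eq_norm]; exact mul_le_of_le_one_left (norm_nonneg _) hξ

theorem exists_finset_supDist_le (hK : IsCompact K) {δ : ℝ} (hδ : 0 < δ) :
    ∃ t : Finset X, ∀ ξ η : X →L[ℝ] ℝ, ‖ξ‖ ≤ 1 → ‖η‖ ≤ 1 →
      (∀ x ∈ t, |ξ x - η x| < δ) → supDist K ξ η ≤ 3 * δ := by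
  obtain ⟨t, -, hcover⟩ :=
    hK.elim_nhds_subcover (fun x => Metric.ball x δ) fun x _ => Metric.ball_mem_nhds x hδ
  refine ⟨t, fun ξ η hξ hη ht => supDist_le (by positivity) fun y hy => ?_⟩
  obtain ⟨x, hxt, hyx⟩ := Set.mem_iUnion₂.1 (hcover hy)
  rw [Metric.mem_ball] at hyx
  have hξ' := abs_apply_sub_apply_le hξ y x
  have hη' := abs_apply_sub_apply_le hη x y
  linarith [abs_sub_le (ξ y) (ξ x) (η y), abs_sub_le (ξ x) (η x) (η y), ht x hxt, dist_comm x y]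

theorem exists_pos_abs_apply_sub_lt (hK : IsBounded K) (hdense : Dense (⋃ c : ℝ, c • K))
    (x : X) {ε : ℝ} (hε : 0 < ε) :
    ∃ δ > 0, ∀ ξ η : X →L[ℝ] ℝ, ‖ξ‖ ≤ 1 → ‖η‖ ≤ 1 → supDist K ξ η < δ → |ξ x - η x| < ε := by
  obtain ⟨_, hcone, hx⟩ := Metric.mem_closure_iff.1 (hdense x) (ε / 4) (by positivity)
  obtain ⟨c, y, hy, rfl⟩ : ∃ c : ℝ, ∃ y ∈ K, c • y = _ := by
    simpa only [Set.mem_iUnion, Set.mem_smul_set] using hcone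
  refine ⟨ε / (2 * (|c| + 1)), by positivity, fun ξ η hξ hη hd => ?_⟩
  have hcd : |c| * supDist K ξ η < ε / 2 :=
    calc |c| * supDist K ξ η ≤ |c| * (ε / (2 * (|c| + 1))) := by gcongr
      _ < ε / 2 := by
        rw [mul_div_assoc', div_lt_div_iff₀ (by positivity) two_pos]
        nlinarith [abs_nonneg c]
  have hξ' := abs_apply_sub_apply_le hξ x (c • y)
  have hη' := abs_apply_sub_apply_le hη (c • y) x
  linarith [abs_sub_le (ξ x) (ξ (c • y)) (η x), abs_sub_le (ξ (c • y)) (η (c • y)) (η x),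
    abs_apply_smul_sub_le hK ξ η c hy, dist_comm x (c • y)]

theorem isOpen_setOf_supDist_lt (hK : IsCompact K) (ξ₀ : X →L[ℝ] ℝ) (ε : ℝ) :
    IsOpen[induced (fun ξ : {ξ : X →L[ℝ] ℝ // ‖ξ‖ ≤ 1} => StrongDual.toWeakDual ξ.1)
      inferInstance] {η | supDist K ξ₀ η.1 < ε} := by
  refine (@isOpen_iff_mem_nhds _ (induced _ inferInstance) _).2
    fun η (hη : supDist K ξ₀ η.1 < ε) => ?_
  set δ := (ε - supDist K ξ₀ η.1) / 4 with hδ_def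
  have hδ : 0 < δ := by linarith
  obtain ⟨t, ht⟩ := exists_finset_supDist_le hK hδ
  refine (mem_nhds_induced _ _ _).2 ⟨⋂ x ∈ t, {φ : WeakDual ℝ X | |φ x - η.1 x| < δ}, ?_, ?_⟩
  · refine (Filter.biInter_finset_mem t).2 fun x _ => IsOpen.mem_nhds ?_ (by simpa using hδ)
    exact isOpen_lt ((WeakDual.eval_continuous x).sub continuous_const).abs continuous_const
  · intro ξ hξ
    have hηξ : supDist K η.1 ξ.1 ≤ 3 * δ :=
      ht η.1 ξ.1 η.2 ξ.2 fun x hx => by rw [abs_sub_comm]; exact Set.mem_iInter₂.1 hξ x hx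
    show supDist K ξ₀ ξ.1 < ε
    linarith [supDist_triangle hK.isBounded ξ₀ η.1 ξ.1]

abbrev supDistTopology (K : Set X) : TopologicalSpace {ξ : X →L[ℝ] ℝ // ‖ξ‖ ≤ 1} :=
  generateFrom {s | ∃ (ξ₀ : {ξ : X →L[ℝ] ℝ // ‖ξ‖ ≤ 1}) (ε : ℝ), 0 < ε ∧
    s = {η | supDist K ξ₀.1 η.1 < ε}}

theorem isOpen_supDistTopology_setOf_supDist_lt (ξ₀ : {ξ : X →L[ℝ] ℝ // ‖ξ‖ ≤ 1}) {ε : ℝ}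
    (hε : 0 < ε) : IsOpen[supDistTopology K] {η | supDist K ξ₀.1 η.1 < ε} :=
  isOpen_generateFrom_of_mem ⟨ξ₀, ε, hε, rfl⟩

theorem continuous_toWeakDual_of_dense (hK : IsBounded K) (hdense : Dense (⋃ c : ℝ, c • K)) :
    Continuous[supDistTopology K, inferInstance]
      (fun ξ : {ξ : X →L[ℝ] ℝ // ‖ξ‖ ≤ 1} => StrongDual.toWeakDual ξ.1) := by
  let := supDistTopology K
  refine WeakDual.continuous_of_continuous_eval fun x => continuous_iff_continuousAt.2 fun η => ?_
  refine Metric.tendsto_nhds.2 fun ε hε => ?_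
  obtain ⟨δ, hδ, h⟩ := exists_pos_abs_apply_sub_lt hK hdense x hε
  have hball : {ζ | supDist K η.1 ζ.1 < δ} ∈ 𝓝 η :=
    (isOpen_supDistTopology_setOf_supDist_lt η hδ).mem_nhds (by simpa [supDist_self] using hδ)
  filter_upwards [hball] with ζ hζ
  rw [dist_comm, Real.dist_eq]
  exact h η.1 ζ.1 η.2 ζ.2 hζ

end SupDist

namespace LipSpace

variable {X : Type*} [NormedAddCommGroup X] [NormedSpace ℝ X] [CompleteSpace X]

theorem mem_iUnion_smul_unitBall (S : LipSpace X) {x : X} (hx : S.lipNorm x < ⊤) :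
    x ∈ ⋃ c : ℝ, c • {y | S.lipNorm y ≤ 1} := by
  set c := (S.lipNorm x).toReal + 1
  have hc : 0 < c := by positivity
  refine Set.mem_iUnion.2 ⟨c, c⁻¹ • x, ?_, smul_inv_smul₀ hc.ne' x⟩
  change S.lipNorm (c⁻¹ • x) ≤ 1
  rw [S.lipNorm_smul, ← enorm_eq_nnnorm, Real.enorm_eq_ofReal (by positivity),
    ← ENNReal.ofReal_toReal hx.ne, ← ENNReal.ofReal_mul (by positivity)]
  refine ENNReal.ofReal_le_one.2 ((inv_mul_le_one₀ hc).2 (by linarith))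

theorem dense_iUnion_smul_unitBall (S : LipSpace X) :
    Dense (⋃ c : ℝ, c • {x | S.lipNorm x ≤ 1}) :=
  S.dense_finite.mono fun _ => S.mem_iUnion_smul_unitBall

end LipSpace

/-- For a Lip-space `(X, ‖·‖, ‖·‖_L)`, consider on the dual `X'` the
(finite-valued) metric `d(ξ,η) = sup_{‖x‖_L ≤ 1} |ξ x − η x|`.  On the closed unit ball
`B₁' = {ξ : ‖ξ‖' ≤ 1}` of `X'` the topology induced by `d` coincides with the weak*
topology: the (subspace) weak* topology on `B₁'` equals the topology generated by the
open `d`-balls. -/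
theorem stmt2 {X : Type*} [NormedAddCommGroup X] [NormedSpace ℝ X] [CompleteSpace X]
    (S : LipSpace X) :
    TopologicalSpace.induced
        (fun ξ : {ξ : X →L[ℝ] ℝ // ‖ξ‖ ≤ 1} => StrongDual.toWeakDual ξ.1)
        inferInstance =
      TopologicalSpace.generateFrom
        {s : Set {ξ : X →L[ℝ] ℝ // ‖ξ‖ ≤ 1} |
          ∃ (ξ₀ : {ξ : X →L[ℝ] ℝ // ‖ξ‖ ≤ 1}) (ε : ℝ), 0 < ε ∧
            s = {η : {ξ : X →L[ℝ] ℝ // ‖ξ‖ ≤ 1} |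
              (⨆ x : {x : X // S.lipNorm x ≤ 1}, |ξ₀.1 x.1 - η.1 x.1|) < ε}} := by
  have hK := S.isCompact_unitBall
  refine le_antisymm (le_generateFrom ?_) ?_
  · rintro s ⟨ξ₀, ε, -, rfl⟩
    exact isOpen_setOf_supDist_lt hK ξ₀.1 ε
  · rw [← continuous_iff_le_induced]
    exact continuous_toWeakDual_of_dense hK.isBounded S.dense_iUnion_smul_unitBall
end

section
/- Let (X, ‖·‖, ‖·‖_L) be a Lip-space and n ∈ ℕ. If the set {x ∈ X : ‖x‖_L ≤ 1} can be covered by n norm-balls of radius 1, then ‖x‖ ≤ 2n·‖x‖_L for every x ∈ X. -/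
open scoped ENNReal

/-!
For `y` in the Lip-unit ball the `n + 1` points `(j / n) • y`, `j = 0, …, n`, stay in that ball
(it is star-shaped about `0`), so by pigeonhole two of them, `i ≠ j`, lie in the same norm-ball
of radius `1`. Hence `|i - j| ‖y‖ / n ≤ 2`, i.e. `‖y‖ ≤ 2n`; homogeneity of both norms extends this
to `‖x‖ ≤ 2n ‖x‖_L` on all of `X`.
-/

open scoped NNReal

open Metric

section Pigeonhole

variable {E : Type*} [SeminormedAddCommGroup E] [NormedSpace ℝ E]

theorem norm_le_of_forall_natCast_smul_mem_biUnion_closedBall {t : Finset E} {r : ℝ} {z : E}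
    (h : ∀ j ≤ t.card, (j : ℝ) • z ∈ ⋃ c ∈ t, closedBall c r) : ‖z‖ ≤ 2 * r := by
  have h' : ∀ j ∈ Finset.range (t.card + 1), ∃ c, c ∈ t ∧ (j : ℝ) • z ∈ closedBall c r := by
    intro j hj
    simpa only [Set.mem_iUnion, exists_prop] using h j (Finset.mem_range_succ_iff.mp hj)
  choose! center center_mem mem_ball using h'
  obtain ⟨i, hi, j, hj, hij, hcenter⟩ :=
    Finset.exists_ne_map_eq_of_card_lt_of_maps_to (by simp) center_mem
  have hij' : (1 : ℝ) ≤ |(i : ℝ) - j| := by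
    have : (1 : ℤ) ≤ |(i : ℤ) - j| := Int.one_le_abs (sub_ne_zero.mpr (by exact_mod_cast hij))
    exact_mod_cast this
  calc ‖z‖ ≤ |(i : ℝ) - j| * ‖z‖ := le_mul_of_one_le_left (norm_nonneg z) hij'
    _ = dist ((i : ℝ) • z) ((j : ℝ) • z) := by
      rw [dist_eq_norm, ← sub_smul, norm_smul, Real.norm_eq_abs]
    _ ≤ dist ((i : ℝ) • z) (center i) + dist (center j) ((j : ℝ) • z) :=
      hcenter ▸ dist_triangle _ _ _
    _ ≤ r + r := add_le_add (mem_ball i hi) (dist_comm (center j) _ ▸ mem_ball j hj)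
    _ = 2 * r := by ring

theorem StarConvex.norm_le_of_subset_biUnion_closedBall {s : Set E} (hs : StarConvex ℝ 0 s)
    {t : Finset E} {r : ℝ} (hcover : s ⊆ ⋃ c ∈ t, closedBall c r) {y : E} (hy : y ∈ s) :
    ‖y‖ ≤ 2 * r * t.card := by
  have ht : (0 : ℝ) < t.card := by
    obtain ⟨c, hc, -⟩ := Set.mem_iUnion₂.mp (hcover hy)
    exact_mod_cast Finset.card_pos.mpr ⟨c, hc⟩
  have hz : ‖(t.card : ℝ)⁻¹ • y‖ ≤ 2 * r := by
    refine norm_le_of_forall_natCast_smul_mem_biUnion_closedBall fun j hj => hcover ?_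
    rw [smul_smul]
    refine hs.smul_mem hy (by positivity) ?_
    rw [← div_eq_mul_inv, div_le_one ht]
    exact_mod_cast hj
  rwa [norm_smul, norm_inv, Real.norm_natCast, inv_mul_le_iff₀ ht, mul_comm] at hz

end Pigeonhole

namespace LipSpace

variable {X : Type*} [NormedAddCommGroup X] [NormedSpace ℝ X] [CompleteSpace X] (S : LipSpace X)

theorem starConvex_unitBall : StarConvex ℝ 0 {x : X | S.lipNorm x ≤ 1} := by
  intro y hy a b ha hb hab
  have hb1 : ‖b‖₊ ≤ 1 := by
    rw [← NNReal.coe_le_coe, coe_nnnorm, Real.norm_of_nonneg hb, NNReal.coe_one]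
    linarith
  show S.lipNorm (a • 0 + b • y) ≤ 1
  rw [smul_zero, zero_add, S.lipNorm_smul]
  exact mul_le_one' (by exact_mod_cast hb1) hy

theorem lipNorm_zero_s4 : S.lipNorm 0 = 0 := by
  simpa using S.lipNorm_smul 0 0

theorem nnnorm_le_mul_lipNorm {C : ℝ≥0} (hC : C ≠ 0)
    (h : ∀ y, S.lipNorm y ≤ 1 → ‖y‖₊ ≤ C) (x : X) :
    (‖x‖₊ : ℝ≥0∞) ≤ C * S.lipNorm x := by
  rcases eq_or_ne (S.lipNorm x) ⊤ with htop | htop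
  · simp [htop, hC]
  rcases eq_or_ne x 0 with rfl | hx
  · simp
  lift S.lipNorm x to ℝ≥0 using htop with a ha
  have ha0 : a ≠ 0 := by
    rintro rfl
    exact hx (S.lipNorm_eq_zero x ha.symm)
  have hy : S.lipNorm ((a : ℝ)⁻¹ • x) ≤ 1 := by
    rw [S.lipNorm_smul, ← ha]
    simp [ha0]
  have hxa := h _ hy
  rw [nnnorm_smul, nnnorm_inv, NNReal.nnnorm_eq, inv_mul_le_iff₀ (pos_iff_ne_zero.mpr ha0)] at hxa
  rw [mul_comm]
  exact_mod_cast hxa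

end LipSpace

/-- If the Lip-unit ball `{x : ‖x‖_L ≤ 1}` of a Lip-space can be covered
by `n` norm-balls of radius `1`, then `‖x‖ ≤ 2 n ‖x‖_L` for every `x ∈ X`. -/
theorem stmt4 {X : Type*} [NormedAddCommGroup X] [NormedSpace ℝ X] [CompleteSpace X]
    (S : LipSpace X) (n : ℕ) (t : Finset X) (hcard : t.card ≤ n)
    (hcover : {x : X | S.lipNorm x ≤ 1} ⊆ ⋃ c ∈ t, Metric.closedBall c 1) :
    ∀ x : X, (‖x‖₊ : ℝ≥0∞) ≤ 2 * n * S.lipNorm x := by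
  have hn : n ≠ 0 := by
    obtain ⟨c, hc, -⟩ := Set.mem_iUnion₂.mp (hcover (a := 0) (by simp [S.lipNorm_zero_s4]))
    exact Nat.pos_iff_ne_zero.mp ((Finset.card_pos.mpr ⟨c, hc⟩).trans_le hcard)
  have hball : ∀ y, S.lipNorm y ≤ 1 → ‖y‖₊ ≤ 2 * n := fun y hy => by
    have := S.starConvex_unitBall.norm_le_of_subset_biUnion_closedBall hcover hy
    rw [← NNReal.coe_le_coe]
    push_cast
    have : (t.card : ℝ) ≤ n := by exact_mod_cast hcard
    linarith
  exact_mod_cast S.nnnorm_le_mul_lipNorm (by positivity) hball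
end

section
/- Let (X_n)_{n∈ℕ} be a uniform sequence of Lip-spaces and 𝒰 a free ultrafilter on ℕ. Then the Lip-ultraproduct ℓ∞_L(X_n, 𝒰), endowed with the quotient norm ‖·‖_𝒰 and the quotient Lip-norm ‖·‖_{L,𝒰}, is itself a Lip-space; in particular the set {x_𝒰 ∈ ℓ∞_L(X_n,𝒰) : ‖x_𝒰‖_{L,𝒰} ≤ 1} is compact in the quotient norm. Moreover the radius of this Lip-space equals lim_𝒰 R_n, where R_n is the radius of X_n. -/
open scoped ENNReal NNReal
open Filter

theorem LipSpace.lipNorm_zero {X : Type*} [NormedAddCommGroup X] [NormedSpace ℝ X]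
    [CompleteSpace X] (S : LipSpace X) : S.lipNorm 0 = 0 := by
  have h := S.lipNorm_smul 0 0
  simpa using h

variable (X : ℕ → Type*) [∀ n, NormedAddCommGroup (X n)] [∀ n, NormedSpace ℝ (X n)]
  [∀ n, CompleteSpace (X n)] (S : ∀ n, LipSpace (X n))

/-- The submodule of `ℓ∞(X_n)` of sequences with uniformly bounded Lip-norms. -/
noncomputable def finLip : Submodule ℝ (lp (fun n => X n) ⊤) where
  carrier := {f | ∃ C : ℝ≥0, ∀ n, (S n).lipNorm (f n) ≤ C}
  zero_mem' := ⟨0, fun n => by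
    have h0 : ((0 : lp (fun n => X n) ⊤) : ∀ m, X m) n = 0 := by simp
    rw [h0, (S n).lipNorm_zero]
    simp⟩
  add_mem' := by
    rintro f g ⟨C, hC⟩ ⟨D, hD⟩
    refine ⟨C + D, fun n => ?_⟩
    have h1 : (S n).lipNorm ((f + g : lp (fun n => X n) ⊤) n) ≤
        (S n).lipNorm (f n) + (S n).lipNorm (g n) := by
      have : (f + g : lp (fun n => X n) ⊤) n = f n + g n := by
        simp [lp.coeFn_add]
      rw [this]; exact (S n).lipNorm_add_le _ _
    refine h1.trans ?_
    push_cast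
    exact add_le_add (hC n) (hD n)
  smul_mem' := by
    rintro c f ⟨C, hC⟩
    refine ⟨‖c‖₊ * C, fun n => ?_⟩
    have : (c • f : lp (fun n => X n) ⊤) n = c • (f n) := by
      simp [lp.coeFn_smul]
    rw [this, (S n).lipNorm_smul]
    push_cast
    exact mul_le_mul_of_nonneg_left (hC n) (zero_le)

/-- ℓ∞_L(X_n): the norm closure in `ℓ∞(X_n)` of the bounded sequences with uniformly
bounded Lip-norms. -/
noncomputable def lipClosure : Submodule ℝ (lp (fun n => X n) ⊤) :=
  (finLip X S).topologicalClosure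

variable (U : Ultrafilter ℕ)

/-- The null subspace of `ℓ∞_L(X_n)` relative to the ultrafilter `U`. -/
noncomputable def nullU : Submodule ℝ ↥(lipClosure X S) where
  carrier := {f | Tendsto (fun n => ‖(f : lp (fun n => X n) ⊤) n‖) (U : Filter ℕ) (nhds 0)}
  zero_mem' := by
    simp only [Set.mem_setOf_eq, Submodule.coe_zero, lp.coeFn_zero]
    simp only [Pi.zero_apply, norm_zero]
    exact tendsto_const_nhds
  add_mem' := by
    intro f g hf hg
    have hsum : Tendsto (fun n => ‖(f : lp (fun n => X n) ⊤) n‖ +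
        ‖(g : lp (fun n => X n) ⊤) n‖) (U : Filter ℕ) (nhds 0) := by
      simpa using hf.add hg
    refine squeeze_zero (fun n => norm_nonneg _) (fun n => ?_) hsum
    have : ((f + g : ↥(lipClosure X S)) : lp (fun n => X n) ⊤) n =
        (f : lp (fun n => X n) ⊤) n + (g : lp (fun n => X n) ⊤) n := by
      simp [lp.coeFn_add]
    rw [this]; exact norm_add_le _ _
  smul_mem' := by
    intro c f hf
    have : Tendsto (fun n => ‖c‖ * ‖(f : lp (fun n => X n) ⊤) n‖) (U : Filter ℕ)
        (nhds 0) := by simpa using hf.const_mul ‖c‖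
    refine squeeze_zero (fun n => norm_nonneg _) (fun n => ?_) this
    have h1 : ((c • f : ↥(lipClosure X S)) : lp (fun n => X n) ⊤) n =
        c • ((f : lp (fun n => X n) ⊤) n) := by
      simp [lp.coeFn_smul]
    rw [h1, norm_smul]

/-- The Lip-ultraproduct `ℓ∞_L(X_n, U)`: the quotient of `ℓ∞_L(X_n)` by the null
subspace, i.e. the image of `ℓ∞_L(X_n)` in the ultraproduct `ℓ∞(X_n, U)`. -/
noncomputable abbrev LipUltraproduct := ↥(lipClosure X S) ⧸ (nullU X S U)

/-- The quotient Lip-norm on the Lip-ultraproduct: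
`‖q‖_{L,U} = inf { sup_n ‖f_n‖_L : f a representative of q }`. -/
noncomputable def lipQ (q : LipUltraproduct X S U) : ℝ≥0∞ :=
  ⨅ f : {f : ↥(lipClosure X S) // Submodule.Quotient.mk f = q},
    ⨆ n, (S n).lipNorm ((f.1 : lp (fun n => X n) ⊤) n)


/-!
The uniform covering numbers bound the Lip unit balls of all `X n` by one constant `R`, so
sequences of points of these balls lie in `ℓ∞_L`. The quotient norm is computed along the
ultrafilter, `‖x_𝒰‖ = lim_𝒰 ‖x_n‖`, because truncation off a `𝒰`-large set does not change a
class. The key fact is that the Lip unit ball of the ultraproduct is exactly the image `D` of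
the product of the Lip unit balls: elements of Lip-norm `< 1` lie in `D` by definition of the
quotient Lip-norm, and `D` is closed by a diagonal argument that needs the ultrafilter to be
free. `D` is totally bounded, since nets of a common size `m` in the `X n` give an `m`-point
net of `D` (a sequence of indices below `m` is constant on a `𝒰`-large set), hence compact.
The radius formula is the computation of `sup_{x ∈ D} ‖x‖` through `‖x_𝒰‖ = lim_𝒰 ‖x_n‖`.
-/

open Metric Topology

section HomogeneousLipNorm

variable {E : Type*} [SeminormedAddCommGroup E] [NormedSpace ℝ E] {L : E → ℝ≥0∞}

theorem apply_smul_of_apply_smul_le (hL : ∀ (c : ℝ) x, L (c • x) ≤ ‖c‖₊ * L x) (c : ℝ) (x : E) :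
    L (c • x) = ‖c‖₊ * L x := by
  rcases eq_or_ne c 0 with rfl | hc
  · simpa using hL 0 x
  refine (hL c x).antisymm ?_
  calc (‖c‖₊ : ℝ≥0∞) * L x = ‖c‖₊ * L (c⁻¹ • c • x) := by rw [inv_smul_smul₀ hc]
    _ ≤ ‖c‖₊ * (‖c⁻¹‖₊ * L (c • x)) := by gcongr; exact hL _ _
    _ = L (c • x) := by
      rw [← mul_assoc, ← ENNReal.coe_mul, ← nnnorm_mul, mul_inv_cancel₀ hc, nnnorm_one,
        ENNReal.coe_one, one_mul]

theorem starConvex_setOf_le_one (hL : ∀ (c : ℝ) x, L (c • x) = ‖c‖₊ * L x) :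
    StarConvex ℝ 0 {x | L x ≤ 1} := by
  intro y (hy : L y ≤ 1) a b _ hb hab
  have hb1 : ‖b‖₊ ≤ 1 := by
    rw [← NNReal.coe_le_one, coe_nnnorm, Real.norm_of_nonneg hb]
    linarith
  show L (a • 0 + b • y) ≤ 1
  rw [smul_zero, zero_add, hL]
  exact mul_le_one' (by exact_mod_cast hb1) hy

theorem setOf_le_one_subset_closure_setOf_lt_one (hL : ∀ (c : ℝ) x, L (c • x) = ‖c‖₊ * L x) :
    {x | L x ≤ 1} ⊆ closure {x | L x < 1} := by
  intro x (hx : L x ≤ 1)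
  have hlim : Tendsto (fun t : ℝ => t • x) (𝓝[<] 1) (𝓝 x) :=
    ((continuous_id.smul continuous_const).tendsto' (1 : ℝ) x (one_smul ℝ x)).mono_left
      nhdsWithin_le_nhds
  refine mem_closure_of_tendsto hlim ?_
  filter_upwards [Ioo_mem_nhdsLT (show (0 : ℝ) < 1 from one_pos)] with t ht
  have ht1 : (‖t‖₊ : ℝ≥0∞) < 1 := by
    rw [ENNReal.coe_lt_one_iff, ← NNReal.coe_lt_one, coe_nnnorm, Real.norm_of_nonneg ht.1.le]
    exact ht.2
  show L (t • x) < 1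
  rw [hL]
  calc (‖t‖₊ : ℝ≥0∞) * L x ≤ ‖t‖₊ * 1 := by gcongr
    _ < 1 := by rwa [mul_one]

theorem norm_eq_zero_of_apply_eq_zero (hL : ∀ (c : ℝ) x, L (c • x) = ‖c‖₊ * L x) {R : ℝ}
    (hR : ∀ x, L x < 1 → ‖x‖ ≤ R) {x : E} (hx : L x = 0) : ‖x‖ = 0 := by
  by_contra hne
  have hpos : 0 < ‖x‖ := (norm_nonneg x).lt_of_ne' hne
  have h := hR (((|R| + 1) / ‖x‖) • x) (by simp [hL, hx])
  rw [norm_smul, Real.norm_of_nonneg (by positivity), div_mul_cancel₀ _ hpos.ne'] at h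
  linarith [le_abs_self R]

theorem iSup_nnnorm_div_eq_iSup_le_one (hL : ∀ (c : ℝ) x, L (c • x) = ‖c‖₊ * L x)
    (h0 : ∀ x, L x = 0 → x = 0) :
    ⨆ x : {x : E // x ≠ 0}, (‖x.1‖₊ : ℝ≥0∞) / L x.1 = ⨆ (x) (_ : L x ≤ 1), (‖x‖₊ : ℝ≥0∞) := by
  refine le_antisymm (iSup_le fun ⟨x, hx⟩ => ?_) (iSup₂_le fun x hx => ?_)
  · have hL0 : L x ≠ 0 := fun h => hx (h0 x h)
    rcases eq_or_ne (L x) ⊤ with htop | htop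
    · simp [htop]
    have hinv : ((‖(((L x).toNNReal⁻¹ : ℝ≥0) : ℝ)‖₊ : ℝ≥0) : ℝ≥0∞) = (L x)⁻¹ := by
      rw [NNReal.nnnorm_eq, ENNReal.coe_inv (by simp [ENNReal.toNNReal_eq_zero_iff, hL0, htop]),
        ENNReal.coe_toNNReal htop]
    refine le_iSup₂_of_le ((((L x).toNNReal⁻¹ : ℝ≥0) : ℝ) • x) ?_ ?_
    · rw [hL, hinv, ENNReal.inv_mul_cancel hL0 htop]
    · rw [nnnorm_smul, ENNReal.coe_mul, hinv, ENNReal.div_eq_inv_mul]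
  · rcases eq_or_ne x 0 with rfl | hx0
    · simp
    refine le_iSup_of_le ⟨x, hx0⟩ ?_
    calc (‖x‖₊ : ℝ≥0∞) = ‖x‖₊ / 1 := (div_one _).symm
      _ ≤ ‖x‖₊ / L x := ENNReal.div_le_div_left hx _

-- `m + 1` points of `s` on the segment `[0, x]` at mutual distances `≥ 3` cannot share `m` balls.
theorem StarConvex.norm_le_of_subset_iUnion_closedBall {s : Set E} (hs : StarConvex ℝ 0 s)
    {t : Finset E} (hst : s ⊆ ⋃ c ∈ t, closedBall c 1) {x : E} (hx : x ∈ s) :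
    ‖x‖ ≤ 3 * t.card := by
  by_contra! hbig
  have hpos : 0 < ‖x‖ := lt_of_le_of_lt (by positivity) hbig
  set p : ℕ → E := fun j => (3 * j / ‖x‖) • x
  have hp : ∀ j ∈ Finset.range (t.card + 1), ∃ c ∈ t, p j ∈ closedBall c 1 := by
    intro j hj
    have hj : (j : ℝ) ≤ t.card := by exact_mod_cast Nat.lt_succ_iff.1 (Finset.mem_range.1 hj)
    simpa using hst (hs.smul_mem hx (by positivity) ((div_le_one hpos).2 (by linarith)))
  choose! c hct hpc using hp
  obtain ⟨i, hi, j, hj, hij, hc⟩ := Finset.exists_ne_map_eq_of_card_lt_of_maps_to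
    (by simp) (fun j hj => hct j hj)
  have hdist : dist (p i) (p j) = 3 * |(i : ℝ) - j| := by
    rw [dist_eq_norm, ← sub_smul, norm_smul, ← sub_div, Real.norm_eq_abs, abs_div,
      abs_of_pos hpos, div_mul_cancel₀ _ hpos.ne', ← mul_sub, abs_mul, abs_of_pos three_pos]
  have hsep : (1 : ℝ) ≤ |(i : ℝ) - j| := by
    rcases Nat.lt_or_gt_of_ne hij with h | h
    · rw [abs_sub_comm]; exact le_abs.2 (Or.inl (by rw [le_sub_iff_add_le']; exact_mod_cast h))
    · exact le_abs.2 (Or.inl (by rw [le_sub_iff_add_le']; exact_mod_cast h))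
  have hclose : dist (p i) (p j) ≤ 2 := by
    have h1 := mem_closedBall.1 (hpc i hi)
    have h2 := mem_closedBall'.1 (hpc j hj)
    rw [hc] at h1
    linarith [dist_triangle (p i) (c j) (p j)]
  linarith

end HomogeneousLipNorm

theorem exists_seq_mem_forall_exists_dist_le {Y : Type*} [PseudoMetricSpace Y] {s : Set Y}
    {a : Y} (ha : a ∈ s) {t : Finset Y} {ε : ℝ} (hst : s ⊆ ⋃ c ∈ t, closedBall c ε) :
    ∃ c : ℕ → Y, (∀ j, c j ∈ s) ∧ ∀ x ∈ s, ∃ j < t.card, dist x (c j) ≤ 2 * ε := by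
  classical
  have hw : ∀ y : Y, ∃ z ∈ s, (∃ x ∈ s, dist x y ≤ ε) → dist z y ≤ ε := by
    intro y
    by_cases h : ∃ x ∈ s, dist x y ≤ ε
    · obtain ⟨x, hx, hxy⟩ := h
      exact ⟨x, hx, fun _ => hxy⟩
    · exact ⟨a, ha, fun h' => absurd h' h⟩
  choose w hws hw using hw
  refine ⟨fun j => w (t.toList.getD j a), fun j => hws _, fun x hx => ?_⟩
  obtain ⟨y, hyt, hxy⟩ : ∃ y ∈ t, dist x y ≤ ε := by simpa using hst hx
  obtain ⟨j, hj, rfl⟩ := List.getElem_of_mem (Finset.mem_toList.2 hyt)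
  refine ⟨j, by simpa using hj, ?_⟩
  show dist x (w (t.toList.getD j a)) ≤ 2 * ε
  rw [List.getD_eq_getElem _ _ hj]
  linarith [dist_triangle_right x (w t.toList[j]) t.toList[j], hw _ ⟨x, hx, hxy⟩]

theorem dist_le_of_dist_succ_le_geometric_two {Y : Type*} [PseudoMetricSpace Y] {x : ℕ → Y}
    {C : ℝ} (hC : 0 ≤ C) {k m : ℕ} (hkm : k ≤ m)
    (h : ∀ i, k ≤ i → i < m → dist (x i) (x (i + 1)) ≤ C * (1 / 2) ^ i) :
    dist (x k) (x m) ≤ 2 * C * (1 / 2) ^ k :=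
  calc dist (x k) (x m) ≤ ∑ i ∈ Finset.Ico k m, C * (1 / 2 : ℝ) ^ i :=
        dist_le_Ico_sum_of_dist_le hkm fun hki him => h _ hki him
    _ = C * ∑ i ∈ Finset.Ico k m, (1 / 2 : ℝ) ^ i := (Finset.mul_sum _ _ _).symm
    _ ≤ C * ((1 / 2) ^ k / (1 - 1 / 2)) := by
        gcongr; exact geom_sum_Ico_le_of_lt_one (by norm_num) (by norm_num)
    _ = 2 * C * (1 / 2) ^ k := by ring

theorem Filter.exists_tendsto_atTop_forall_lt_mem {l : Filter ℕ} (hl : l ≤ cofinite)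
    {A : ℕ → Set ℕ} (hA : ∀ k, A k ∈ l) :
    ∃ φ : ℕ → ℕ, Tendsto φ l atTop ∧ ∀ n, ∀ i < φ n, n ∈ A i := by
  classical
  refine ⟨fun n => Nat.findGreatest (fun k => ∀ i < k, n ∈ A i) n, tendsto_atTop.2 fun k => ?_,
    fun n => Nat.findGreatest_spec (P := fun k => ∀ i < k, n ∈ A i) (m := 0) (Nat.zero_le n)
      fun i hi => absurd hi (Nat.not_lt_zero i)⟩
  have hk : ∀ᶠ n in l, k ≤ n := (Nat.cofinite_eq_atTop ▸ hl) (eventually_ge_atTop k)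
  have hA' : ∀ᶠ n in l, ∀ i < k, n ∈ A i :=
    (eventually_all_finite (Set.finite_lt_nat k)).2 fun i _ => hA i
  filter_upwards [hk, hA'] with n hkn hn
  exact Nat.le_findGreatest hkn hn

namespace lp

variable {ι : Type*} {E : ι → Type*} [∀ i, NormedAddCommGroup (E i)]

open Classical in
noncomputable def indicator (A : Set ι) : lp E ∞ →+ lp E ∞ where
  toFun f := ⟨fun i => if i ∈ A then f i else 0, memℓp_infty ⟨‖f‖, by
    rintro _ ⟨i, rfl⟩
    dsimp only
    split_ifs
    · exact norm_apply_le_norm ENNReal.top_ne_zero f i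
    · simp⟩⟩
  map_zero' := by ext i; simp
  map_add' f g := by
    ext i
    show (if i ∈ A then (f + g) i else 0) = (if i ∈ A then f i else 0) + (if i ∈ A then g i else 0)
    split_ifs <;> simp

open Classical in
theorem indicator_apply (A : Set ι) (f : lp E ∞) (i : ι) :
    indicator A f i = if i ∈ A then f i else 0 := rfl

theorem norm_indicator_le (A : Set ι) (f : lp E ∞) : ‖indicator A f‖ ≤ ‖f‖ :=
  norm_le_of_forall_le (norm_nonneg f) fun i => by
    rw [indicator_apply]
    split_ifs
    · exact norm_apply_le_norm ENNReal.top_ne_zero f i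
    · simp

theorem continuous_indicator (A : Set ι) : Continuous (indicator (E := E) A) :=
  AddMonoidHomClass.continuous_of_bound _ 1 fun f => by simpa using norm_indicator_le A f

end lp

section LipUltraproduct

variable {X S U}

local notation "ℓ∞X" => lp (fun n => X n) ⊤

local notation "π" => (Submodule.Quotient.mk : lipClosure X S → LipUltraproduct X S U)

instance : CompleteSpace (lipClosure X S) :=
  (Submodule.isClosed_topologicalClosure _).completeSpace_coe

instance : CompleteSpace (LipUltraproduct X S U) := Submodule.Quotient.completeSpace _

noncomputable instance : NormedSpace ℝ (LipUltraproduct X S U) :=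
  Submodule.Quotient.normedSpace _ ℝ

variable (S) in
noncomputable def supLipNorm (f : ℓ∞X) : ℝ≥0∞ := ⨆ n, (S n).lipNorm (f n)

theorem lipNorm_le_supLipNorm (f : ℓ∞X) (n : ℕ) : (S n).lipNorm (f n) ≤ supLipNorm S f :=
  le_iSup (fun n => (S n).lipNorm (f n)) n

theorem supLipNorm_smul (c : ℝ) (f : ℓ∞X) : supLipNorm S (c • f) = ‖c‖₊ * supLipNorm S f := by
  rw [supLipNorm, supLipNorm, ENNReal.mul_iSup]
  exact iSup_congr fun n => (S n).lipNorm_smul c (f n)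

instance (q : LipUltraproduct X S U) : Nonempty {f : lipClosure X S // π f = q} :=
  let ⟨f, hf⟩ := Submodule.Quotient.mk_surjective _ q; ⟨⟨f, hf⟩⟩

theorem lipQ_mk_le (f : lipClosure X S) : lipQ X S U (π f) ≤ supLipNorm S f :=
  iInf_le_of_le ⟨f, rfl⟩ le_rfl

theorem exists_mk_eq_of_lipQ_lt {q : LipUltraproduct X S U} {c : ℝ≥0∞} (h : lipQ X S U q < c) :
    ∃ f : lipClosure X S, π f = q ∧ supLipNorm S f < c :=
  let ⟨⟨f, hf⟩, hlt⟩ := iInf_lt_iff.1 h; ⟨f, hf, hlt⟩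

theorem lipQ_add_le (q q' : LipUltraproduct X S U) :
    lipQ X S U (q + q') ≤ lipQ X S U q + lipQ X S U q' := by
  refine ENNReal.le_iInf_add_iInf fun ⟨f, hf⟩ ⟨g, hg⟩ => ?_
  subst hf hg
  refine (lipQ_mk_le (f + g)).trans (iSup_le fun n => ?_)
  exact ((S n).lipNorm_add_le _ _).trans
    (add_le_add (lipNorm_le_supLipNorm _ n) (lipNorm_le_supLipNorm _ n))

theorem lipQ_smul (c : ℝ) (q : LipUltraproduct X S U) :
    lipQ X S U (c • q) = ‖c‖₊ * lipQ X S U q := by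
  refine apply_smul_of_apply_smul_le (fun c q => ?_) c q
  calc lipQ X S U (c • q)
      ≤ ⨅ f : {f : lipClosure X S // π f = q}, ‖c‖₊ * supLipNorm S f := by
        refine le_iInf fun ⟨f, hf⟩ => ?_
        subst hf
        exact (lipQ_mk_le (c • f)).trans (supLipNorm_smul c (f : ℓ∞X)).le
    _ = ‖c‖₊ * lipQ X S U q := (ENNReal.mul_iInf fun h => absurd h ENNReal.coe_ne_top).symm

theorem indicator_mem_lipClosure (A : Set ℕ) {f : ℓ∞X} (hf : f ∈ lipClosure X S) :
    lp.indicator A f ∈ lipClosure X S := by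
  refine map_mem_closure (lp.continuous_indicator A) hf fun g ⟨C, hC⟩ => ⟨C, fun n => ?_⟩
  rw [lp.indicator_apply]
  split_ifs
  · exact hC n
  · simp [LipSpace.lipNorm_zero]

theorem norm_mk_le_of_eventually_le (f : lipClosure X S) {c : ℝ}
    (h : ∀ᶠ n in (U : Filter ℕ), ‖(f : ℓ∞X) n‖ ≤ c) : ‖π f‖ ≤ c := by
  obtain ⟨n₀, hn₀⟩ := h.exists
  set A := {n | ‖(f : ℓ∞X) n‖ ≤ c}
  let g : lipClosure X S := ⟨lp.indicator A f, indicator_mem_lipClosure A f.2⟩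
  have hgf : π g = π f := by
    refine (Submodule.Quotient.eq _).2 (tendsto_const_nhds.congr' ?_)
    filter_upwards [h] with n (hn : n ∈ A)
    simp [g, lp.indicator_apply, hn]
  rw [← hgf]
  refine (Submodule.Quotient.norm_mk_le _ _).trans ?_
  refine lp.norm_le_of_forall_le ((norm_nonneg _).trans hn₀) fun n => ?_
  show ‖lp.indicator A (f : ℓ∞X) n‖ ≤ c
  rw [lp.indicator_apply]
  split_ifs with hn
  · exact hn
  · simpa using (norm_nonneg _).trans hn₀

theorem eventually_norm_lt_of_norm_mk_lt (f : lipClosure X S) {c : ℝ} (h : ‖π f‖ < c) :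
    ∀ᶠ n in (U : Filter ℕ), ‖(f : ℓ∞X) n‖ < c := by
  obtain ⟨g, hg, hgc⟩ := Submodule.Quotient.norm_mk_lt (π f) (sub_pos.2 h)
  rw [add_sub_cancel] at hgc
  have hnull : Tendsto (fun n => ‖(f : ℓ∞X) n - (g : ℓ∞X) n‖) U (𝓝 0) :=
    (Submodule.Quotient.eq _).1 hg.symm
  filter_upwards [hnull.eventually (gt_mem_nhds (sub_pos.2 hgc))] with n hn
  calc ‖(f : ℓ∞X) n‖ ≤ ‖(g : ℓ∞X) n‖ + ‖(f : ℓ∞X) n - (g : ℓ∞X) n‖ := norm_le_insert' _ _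
    _ < ‖g‖ + (c - ‖g‖) :=
        add_lt_add_of_le_of_lt (lp.norm_apply_le_norm ENNReal.top_ne_zero _ n) hn
    _ = c := add_sub_cancel _ _

theorem tendsto_norm_mk (f : lipClosure X S) :
    Tendsto (fun n => ‖(f : ℓ∞X) n‖) U (𝓝 ‖π f‖) := by
  refine tendsto_order.2 ⟨fun a ha => ?_, fun a ha => eventually_norm_lt_of_norm_mk_lt f ha⟩
  by_contra hne
  rw [← Ultrafilter.eventually_not] at hne
  exact (norm_mk_le_of_eventually_le f (hne.mono fun n hn => not_lt.1 hn)).not_gt ha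

theorem tendsto_nnnorm_mk (f : lipClosure X S) :
    Tendsto (fun n => (‖(f : ℓ∞X) n‖₊ : ℝ≥0∞)) U (𝓝 ‖π f‖₊) :=
  ENNReal.tendsto_coe.2 (NNReal.tendsto_coe.1 (tendsto_norm_mk f))

theorem tendsto_dist_mk (f g : lipClosure X S) :
    Tendsto (fun n => dist ((f : ℓ∞X) n) ((g : ℓ∞X) n)) U (𝓝 (dist (π f) (π g))) := by
  have h := tendsto_norm_mk (U := U) (f - g)
  simp only [Submodule.Quotient.mk_sub, Submodule.coe_sub, lp.coeFn_sub, Pi.sub_apply,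
    ← dist_eq_norm] at h
  rwa [dist_eq_norm (π f)]

theorem eq_zero_of_norm_eq_zero (q : LipUltraproduct X S U) (hq : ‖q‖ = 0) : q = 0 := by
  obtain ⟨f, rfl⟩ := Submodule.Quotient.mk_surjective _ q
  have h := tendsto_norm_mk (U := U) f
  rw [hq] at h
  exact (Submodule.Quotient.mk_eq_zero _).2 h

theorem dense_setOf_lipQ_lt_top : Dense {q : LipUltraproduct X S U | lipQ X S U q < ⊤} := by
  refine (Submodule.Quotient.mk_surjective _).denseRange.dense_of_mapsTo continuous_quot_mk
    (s := {f : lipClosure X S | (f : ℓ∞X) ∈ finLip X S}) ?_ ?_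
  · rw [Subtype.dense_iff]
    exact closure_mono fun g hg => ⟨⟨g, Submodule.le_topologicalClosure _ hg⟩, hg, rfl⟩
  · rintro f ⟨C, hC⟩
    exact (lipQ_mk_le f).trans_lt ((iSup_le hC).trans_lt ENNReal.coe_lt_top)

theorem exists_norm_le_of_lipNorm_le_one
    (hunif : ∀ ε : ℝ, 0 < ε → ∃ m : ℕ, ∀ n, ∃ t : Finset (X n),
      t.card ≤ m ∧ {x : X n | (S n).lipNorm x ≤ 1} ⊆ ⋃ c ∈ t, Metric.closedBall c ε) :
    ∃ R : ℝ, ∀ n (x : X n), (S n).lipNorm x ≤ 1 → ‖x‖ ≤ R := by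
  obtain ⟨m, hm⟩ := hunif 1 one_pos
  refine ⟨3 * m, fun n x hx => ?_⟩
  obtain ⟨t, ht, hcov⟩ := hm n
  calc ‖x‖ ≤ 3 * t.card :=
        (starConvex_setOf_le_one (S n).lipNorm_smul).norm_le_of_subset_iUnion_closedBall hcov hx
    _ ≤ 3 * m := by gcongr

theorem memℓp_of_lipNorm_le_one {R : ℝ} (hR : ∀ n (x : X n), (S n).lipNorm x ≤ 1 → ‖x‖ ≤ R)
    {y : ∀ n, X n} (hy : ∀ n, (S n).lipNorm (y n) ≤ 1) : Memℓp y ⊤ :=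
  memℓp_infty ⟨R, by rintro _ ⟨n, rfl⟩; exact hR n _ (hy n)⟩

noncomputable def lipSeq (y : ∀ n, X n) (hy : Memℓp y ⊤) (hL : ∀ n, (S n).lipNorm (y n) ≤ 1) :
    lipClosure X S :=
  ⟨⟨y, hy⟩, Submodule.le_topologicalClosure _ ⟨1, by simpa using hL⟩⟩

variable (X S U) in
def lipBallImage : Set (LipUltraproduct X S U) :=
  π '' {f | ∀ n, (S n).lipNorm ((f : ℓ∞X) n) ≤ 1}

theorem mk_lipSeq_mem_lipBallImage (y : ∀ n, X n) (hy : Memℓp y ⊤)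
    (hL : ∀ n, (S n).lipNorm (y n) ≤ 1) :
    π (lipSeq y hy hL) ∈ lipBallImage X S U :=
  ⟨lipSeq y hy hL, fun n => hL n, rfl⟩

theorem lipBallImage_subset : lipBallImage X S U ⊆ {q | lipQ X S U q ≤ 1} := by
  rintro _ ⟨f, hf, rfl⟩
  exact (lipQ_mk_le f).trans (iSup_le hf)

theorem setOf_lipQ_lt_one_subset : {q | lipQ X S U q < 1} ⊆ lipBallImage X S U := by
  intro q (hq : lipQ X S U q < 1)
  obtain ⟨f, rfl, hf⟩ := exists_mk_eq_of_lipQ_lt hq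
  exact ⟨f, fun n => (lipNorm_le_supLipNorm _ n).trans hf.le, rfl⟩

theorem norm_le_of_mem_lipBallImage {R : ℝ}
    (hR : ∀ n (x : X n), (S n).lipNorm x ≤ 1 → ‖x‖ ≤ R) {q : LipUltraproduct X S U}
    (hq : q ∈ lipBallImage X S U) : ‖q‖ ≤ R := by
  obtain ⟨f, hf, rfl⟩ := hq
  exact (Submodule.Quotient.norm_mk_le _ _).trans
    (lp.norm_le_of_forall_le' R fun n => hR n _ (hf n))

theorem eq_zero_of_lipQ_eq_zero {R : ℝ} (hR : ∀ n (x : X n), (S n).lipNorm x ≤ 1 → ‖x‖ ≤ R)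
    (q : LipUltraproduct X S U) (hq : lipQ X S U q = 0) : q = 0 := by
  have hball : ∀ p : LipUltraproduct X S U, lipQ X S U p < 1 → ‖p‖ ≤ R := fun p hp =>
    norm_le_of_mem_lipBallImage hR (setOf_lipQ_lt_one_subset hp)
  have hL := norm_eq_zero_of_apply_eq_zero (E := LipUltraproduct X S U) (L := lipQ X S U) lipQ_smul
    (R := R)
  exact eq_zero_of_norm_eq_zero q (hL hball hq)

theorem totallyBounded_lipBallImage
    (hunif : ∀ ε : ℝ, 0 < ε → ∃ m : ℕ, ∀ n, ∃ t : Finset (X n),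
      t.card ≤ m ∧ {x : X n | (S n).lipNorm x ≤ 1} ⊆ ⋃ c ∈ t, Metric.closedBall c ε) :
    TotallyBounded (lipBallImage X S U) := by
  obtain ⟨R, hR⟩ := exists_norm_le_of_lipNorm_le_one hunif
  refine Metric.totallyBounded_iff.2 fun ε hε => ?_
  obtain ⟨m, hm⟩ := hunif (ε / 3) (by positivity)
  have hnet : ∀ n, ∃ c : ℕ → X n, (∀ j, (S n).lipNorm (c j) ≤ 1) ∧
      ∀ x, (S n).lipNorm x ≤ 1 → ∃ j < m, dist x (c j) ≤ 2 * (ε / 3) := by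
    intro n
    obtain ⟨t, ht, hcov⟩ := hm n
    have h0 : (0 : X n) ∈ {x | (S n).lipNorm x ≤ 1} := by
      show (S n).lipNorm 0 ≤ 1
      rw [LipSpace.lipNorm_zero]; exact zero_le_one
    obtain ⟨c, hcs, hc⟩ := exists_seq_mem_forall_exists_dist_le h0 hcov
    exact ⟨c, hcs, fun x hx => (hc x hx).imp fun j hj => ⟨hj.1.trans_le ht, hj.2⟩⟩
  choose c hcL hc using hnet
  let P : ℕ → LipUltraproduct X S U := fun j =>
    π (lipSeq (fun n => c n j) (memℓp_of_lipNorm_le_one hR fun n => hcL n j)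
      fun n => hcL n j)
  refine ⟨P '' Set.Iio m, (Set.finite_Iio m).image P, ?_⟩
  rintro _ ⟨f, hf, rfl⟩
  choose j hjm hj using fun n => hc n _ (hf n)
  obtain ⟨j₀, hj₀m, hj₀⟩ : ∃ j₀ ∈ Set.Iio m, {n | j n = j₀} ∈ U :=
    (Ultrafilter.finite_biUnion_mem_iff (Set.finite_Iio m)).1
      (univ_mem' fun n => Set.mem_biUnion (hjm n) rfl)
  refine Set.mem_biUnion (Set.mem_image_of_mem P hj₀m) (mem_ball.2 ?_)
  calc dist (π f) (P j₀) ≤ 2 * (ε / 3) := by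
        refine le_of_tendsto (tendsto_dist_mk _ _) ?_
        filter_upwards [hj₀] with n (hn : j n = j₀)
        exact hn ▸ hj n
    _ < ε := by linarith

theorem mem_lipBallImage_of_dist_lt {R : ℝ} (hR : ∀ n (x : X n), (S n).lipNorm x ≤ 1 → ‖x‖ ≤ R)
    (hU : (U : Filter ℕ) ≤ cofinite) {q : LipUltraproduct X S U} (G : ℕ → lipClosure X S)
    (hG : ∀ k n, (S n).lipNorm ((G k : ℓ∞X) n) ≤ 1)
    (hGq : ∀ k, dist (π (G k)) q < (1 / 2 : ℝ) ^ k) :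
    q ∈ lipBallImage X S U := by
  have hstep : ∀ k,
      {n | dist ((G k : ℓ∞X) n) ((G (k + 1) : ℓ∞X) n) < 2 * (1 / 2 : ℝ) ^ k} ∈ U := by
    intro k
    refine (tendsto_dist_mk (G k) (G (k + 1))).eventually_lt_const ?_
    calc dist (π (G k)) (π (G (k + 1)))
        ≤ dist (π (G k)) q + dist (π (G (k + 1))) q := dist_triangle_right _ _ _
      _ < (1 / 2) ^ k + (1 / 2) ^ (k + 1) := add_lt_add (hGq k) (hGq (k + 1))
      _ ≤ 2 * (1 / 2 : ℝ) ^ k := by rw [pow_succ]; linarith [pow_pos (one_half_pos (α := ℝ)) k]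
  -- the diagonal `g n = G (φ n) n`, where `φ → ∞` along `U` and all steps before `φ n` are
  -- short at `n`
  obtain ⟨φ, hφ, hφstep⟩ := Filter.exists_tendsto_atTop_forall_lt_mem hU hstep
  let g := lipSeq (fun n => (G (φ n) : ℓ∞X) n)
    (memℓp_of_lipNorm_le_one hR fun n => hG (φ n) n) fun n => hG (φ n) n
  have hgG : ∀ k, dist (π g) (π (G k)) ≤ 4 * (1 / 2 : ℝ) ^ k := by
    intro k
    refine le_of_tendsto (tendsto_dist_mk g (G k)) ?_
    filter_upwards [hφ.eventually_ge_atTop k] with n hkn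
    rw [dist_comm]
    refine (dist_le_of_dist_succ_le_geometric_two (x := fun i => (G i : ℓ∞X) n) zero_le_two hkn
      fun i _ hi => (hφstep n i hi).le).trans_eq (by ring)
  have hdist : dist q (π g) = 0 := by
    have hlim : Tendsto (fun k => 5 * (1 / 2 : ℝ) ^ k) atTop (𝓝 0) := by
      simpa using (tendsto_pow_atTop_nhds_zero_of_lt_one (by norm_num)
        (by norm_num : (1 / 2 : ℝ) < 1)).const_mul 5
    refine le_antisymm (ge_of_tendsto' hlim fun k => ?_) dist_nonneg
    calc dist q (π g) ≤ dist (π (G k)) q + dist (π (G k)) (π g) := dist_triangle_left _ _ _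
      _ ≤ (1 / 2) ^ k + 4 * (1 / 2) ^ k :=
          add_le_add (hGq k).le ((dist_comm _ _).trans_le (hgG k))
      _ = 5 * (1 / 2 : ℝ) ^ k := by ring
  rw [dist_eq_norm q (π g)] at hdist
  exact ⟨g, fun n => hG (φ n) n, (sub_eq_zero.1 (eq_zero_of_norm_eq_zero _ hdist)).symm⟩

theorem isClosed_lipBallImage {R : ℝ} (hR : ∀ n (x : X n), (S n).lipNorm x ≤ 1 → ‖x‖ ≤ R)
    (hU : (U : Filter ℕ) ≤ cofinite) : IsClosed (lipBallImage X S U) := by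
  refine isClosed_of_closure_subset fun q hq => ?_
  have hG : ∀ k : ℕ, ∃ f : lipClosure X S, (∀ n, (S n).lipNorm ((f : ℓ∞X) n) ≤ 1) ∧
      dist (π f) q < (1 / 2 : ℝ) ^ k := by
    intro k
    obtain ⟨_, ⟨f, hf, rfl⟩, hd⟩ := Metric.mem_closure_iff.1 hq ((1 / 2 : ℝ) ^ k) (by positivity)
    exact ⟨f, hf, (dist_comm _ _).trans_lt hd⟩
  choose G hG hGq using hG
  exact mem_lipBallImage_of_dist_lt hR hU G hG hGq

theorem setOf_lipQ_le_one_eq {R : ℝ} (hR : ∀ n (x : X n), (S n).lipNorm x ≤ 1 → ‖x‖ ≤ R)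
    (hU : (U : Filter ℕ) ≤ cofinite) : {q | lipQ X S U q ≤ 1} = lipBallImage X S U := by
  have hclosure := setOf_le_one_subset_closure_setOf_lt_one (E := LipUltraproduct X S U)
    (L := lipQ X S U) lipQ_smul
  exact (hclosure.trans (closure_minimal setOf_lipQ_lt_one_subset
    (isClosed_lipBallImage hR hU))).antisymm lipBallImage_subset

theorem isCompact_setOf_lipQ_le_one
    (hunif : ∀ ε : ℝ, 0 < ε → ∃ m : ℕ, ∀ n, ∃ t : Finset (X n),
      t.card ≤ m ∧ {x : X n | (S n).lipNorm x ≤ 1} ⊆ ⋃ c ∈ t, Metric.closedBall c ε)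
    (hU : (U : Filter ℕ) ≤ cofinite) :
    IsCompact {q : LipUltraproduct X S U | lipQ X S U q ≤ 1} := by
  obtain ⟨R, hR⟩ := exists_norm_le_of_lipNorm_le_one hunif
  rw [setOf_lipQ_le_one_eq hR hU]
  exact (totallyBounded_lipBallImage hunif).isCompact_of_isClosed (isClosed_lipBallImage hR hU)

theorem tendsto_iSup_lipNorm_le_one {R : ℝ}
    (hR : ∀ n (x : X n), (S n).lipNorm x ≤ 1 → ‖x‖ ≤ R) (hU : (U : Filter ℕ) ≤ cofinite) :
    Tendsto (fun n => ⨆ (x : X n) (_ : (S n).lipNorm x ≤ 1), (‖x‖₊ : ℝ≥0∞)) U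
      (𝓝 (⨆ (q : LipUltraproduct X S U) (_ : lipQ X S U q ≤ 1), (‖q‖₊ : ℝ≥0∞))) := by
  set rad := fun n => ⨆ (x : X n) (_ : (S n).lipNorm x ≤ 1), (‖x‖₊ : ℝ≥0∞)
  have hlim : Tendsto rad U (𝓝 (U.map rad).lim) := (U.map rad).le_nhds_lim
  convert hlim using 2
  refine le_antisymm (iSup₂_le fun q hq => ?_) (le_of_forall_lt_imp_le_of_dense fun c hc => ?_)
  · obtain ⟨f, hf, rfl⟩ := (setOf_lipQ_le_one_eq hR hU).subset hq
    exact le_of_tendsto_of_tendsto' (tendsto_nnnorm_mk f) hlim fun n =>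
      le_iSup₂_of_le ((f : ℓ∞X) n) (hf n) le_rfl
  · have hy : ∀ n, ∃ y : X n, (S n).lipNorm y ≤ 1 ∧ (c < rad n → c < ‖y‖₊) := by
      intro n
      by_cases h : c < rad n
      · obtain ⟨y, hy, hcy⟩ := lt_biSup_iff.1 h
        exact ⟨y, hy, fun _ => hcy⟩
      · exact ⟨0, by simp [LipSpace.lipNorm_zero], fun h' => absurd h' h⟩
    choose y hyL hy using hy
    let q := π (lipSeq y (memℓp_of_lipNorm_le_one hR hyL) hyL)
    refine le_iSup₂_of_le q (lipBallImage_subset (mk_lipSeq_mem_lipBallImage _ _ hyL))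
      (ge_of_tendsto (tendsto_nnnorm_mk _) ?_)
    filter_upwards [hlim.eventually_const_lt hc] with n hn using (hy n hn).le

end LipUltraproduct

/-- If `(X_n)` is a uniform sequence of Lip-spaces and `U` is a free
ultrafilter on `ℕ`, then the Lip-ultraproduct `ℓ∞_L(X_n, U)`, with the quotient norm and
the quotient Lip-norm, is again a Lip-space (a Banach space whose Lip-norm is finite on a
dense subspace, is a norm there, and has compact unit ball); in particular
`{q : ‖q‖_{L,U} ≤ 1}` is compact in the quotient norm.  Moreover its radius equals
`lim_U R_n`, where `R_n = sup_{x ≠ 0} ‖x‖/‖x‖_L` is the radius of `X_n`. -/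
theorem stmt8 (hunif : ∀ ε : ℝ, 0 < ε → ∃ m : ℕ, ∀ n, ∃ t : Finset (X n),
      t.card ≤ m ∧ {x : X n | (S n).lipNorm x ≤ 1} ⊆ ⋃ c ∈ t, Metric.closedBall c ε)
    (hU : (U : Filter ℕ) ≤ Filter.cofinite) :
    (∀ q q' : LipUltraproduct X S U,
        lipQ X S U (q + q') ≤ lipQ X S U q + lipQ X S U q') ∧
      (∀ (c : ℝ) (q : LipUltraproduct X S U),
        lipQ X S U (c • q) = (‖c‖₊ : ℝ≥0∞) * lipQ X S U q) ∧
      (∀ q : LipUltraproduct X S U, lipQ X S U q = 0 → q = 0) ∧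
      (∀ q : LipUltraproduct X S U, ‖q‖ = 0 → q = 0) ∧
      CompleteSpace (LipUltraproduct X S U) ∧
      Dense {q : LipUltraproduct X S U | lipQ X S U q < ⊤} ∧
      IsCompact {q : LipUltraproduct X S U | lipQ X S U q ≤ 1} ∧
      Tendsto (fun n => ⨆ x : {x : X n // x ≠ 0}, (‖x.1‖₊ : ℝ≥0∞) / (S n).lipNorm x.1)
        (U : Filter ℕ)
        (nhds (⨆ q : {q : LipUltraproduct X S U // q ≠ 0},
          (‖q.1‖₊ : ℝ≥0∞) / lipQ X S U q.1)) := by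
  obtain ⟨R, hR⟩ := exists_norm_le_of_lipNorm_le_one hunif
  refine ⟨lipQ_add_le, lipQ_smul, eq_zero_of_lipQ_eq_zero hR, eq_zero_of_norm_eq_zero,
    inferInstance, dense_setOf_lipQ_lt_top, isCompact_setOf_lipQ_le_one hunif hU, ?_⟩
  have hrad : ∀ n, ⨆ x : {x : X n // x ≠ 0}, (‖x.1‖₊ : ℝ≥0∞) / (S n).lipNorm x.1 =
      ⨆ (x : X n) (_ : (S n).lipNorm x ≤ 1), (‖x‖₊ : ℝ≥0∞) := fun n =>
    iSup_nnnorm_div_eq_iSup_le_one (S n).lipNorm_smul (S n).lipNorm_eq_zero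
  have hradU := iSup_nnnorm_div_eq_iSup_le_one (E := LipUltraproduct X S U) (L := lipQ X S U)
    lipQ_smul
  rw [funext hrad, hradU (eq_zero_of_lipQ_eq_zero hR)]
  exact tendsto_iSup_lipNorm_le_one hR hU
end

section
/- Let (X, e) be an order-unit space whose norm satisfies ‖a‖ = inf{r ∈ ℝ : −re ≤ a ≤ re}, assume S(X) is nonempty, and assume ‖b‖ = sup_{ω ∈ S(X)} |ω(b)| for all b ∈ X. Then for every a ∈ X, inf_{λ∈ℝ} ‖a − λe‖ = (sup_{ω ∈ S(X)} ω(a) − inf_{ω ∈ S(X)} ω(a)) / 2. -/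
/-- Let `(X, e)` be an order-unit space (an Archimedean partially
ordered real vector space with order unit `e`) whose norm is given by
`‖a‖ = inf {r : −r•e ≤ a ≤ r•e}`; assume the state space
`S(X) = {ω ∈ X' : ω(e) = ‖ω‖ = 1}` is nonempty and that Kadison's representation formula
`‖b‖ = sup_{ω ∈ S(X)} |ω(b)|` holds.  Then for every `a ∈ X`,
`inf_{λ ∈ ℝ} ‖a − λ•e‖ = (sup_{ω ∈ S(X)} ω(a) − inf_{ω ∈ S(X)} ω(a))/2`. -/
theorem stmt11 {X : Type*} [NormedAddCommGroup X] [NormedSpace ℝ X] [PartialOrder X]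
    (e : X)
    (hadd : ∀ a b c : X, a ≤ b → a + c ≤ b + c)
    (hsmul : ∀ (t : ℝ) (a : X), 0 ≤ t → 0 ≤ a → 0 ≤ t • a)
    (hunit : ∀ a : X, ∃ r : ℝ, a ≤ r • e)
    (harch : ∀ a : X, (∀ r : ℝ, 0 < r → a ≤ r • e) → a ≤ 0)
    (hnorm : ∀ a : X, ‖a‖ = sInf {r : ℝ | -(r • e) ≤ a ∧ a ≤ r • e})
    (hne : Nonempty {ω : X →L[ℝ] ℝ // ω e = 1 ∧ ‖ω‖ = 1})
    (hkad : ∀ b : X, ‖b‖ = ⨆ ω : {ω : X →L[ℝ] ℝ // ω e = 1 ∧ ‖ω‖ = 1}, |ω.1 b|)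
    (a : X) :
    (⨅ l : ℝ, ‖a - l • e‖) =
      ((⨆ ω : {ω : X →L[ℝ] ℝ // ω e = 1 ∧ ‖ω‖ = 1}, ω.1 a) -
        (⨅ ω : {ω : X →L[ℝ] ℝ // ω e = 1 ∧ ‖ω‖ = 1}, ω.1 a)) / 2 := by
  classical
  haveI : Nonempty {ω : X →L[ℝ] ℝ // ω e = 1 ∧ ‖ω‖ = 1} := hne
  set S := {ω : X →L[ℝ] ℝ // ω e = 1 ∧ ‖ω‖ = 1} with hS
  set f : S → ℝ := fun ω => ω.1 a with hf
  -- boundedness of states on any element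
  have hbd : ∀ (b : X) (ω : S), |ω.1 b| ≤ ‖b‖ := by
    intro b ω
    calc |ω.1 b| = ‖ω.1 b‖ := rfl
      _ ≤ ‖ω.1‖ * ‖b‖ := ω.1.le_opNorm b
      _ = ‖b‖ := by rw [ω.2.2, one_mul]
  have hAbove : BddAbove (Set.range f) := by
    refine ⟨‖a‖, ?_⟩
    rintro x ⟨ω, rfl⟩
    exact le_trans (le_abs_self _) (hbd a ω)
  have hBelow : BddBelow (Set.range f) := by
    refine ⟨-‖a‖, ?_⟩
    rintro x ⟨ω, rfl⟩
    exact neg_le_of_neg_le (le_trans (neg_le_abs _) (hbd a ω)) |>.trans_eq rfl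
  set M := ⨆ ω : S, f ω with hM
  set m := ⨅ ω : S, f ω with hm
  have hval : ∀ (l : ℝ) (ω : S), ω.1 (a - l • e) = f ω - l := by
    intro l ω
    simp [f, map_sub, map_smul, ω.2.1]
  have hnorm' : ∀ l : ℝ, ‖a - l • e‖ = ⨆ ω : S, |f ω - l| := by
    intro l
    rw [hkad (a - l • e)]
    exact iSup_congr fun ω => by rw [hval]
  have hAbs : ∀ l : ℝ, BddAbove (Set.range fun ω : S => |f ω - l|) := by
    intro l
    refine ⟨‖a - l • e‖, ?_⟩
    rintro x ⟨ω, rfl⟩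
    show |f ω - l| ≤ _
    rw [← hval l ω]
    exact hbd _ ω
  have hmM : m ≤ M := by
    obtain ⟨ω⟩ := hne
    exact le_trans (ciInf_le hBelow ω) (le_ciSup hAbove ω)
  -- lower bound for each l
  have hlow : ∀ l : ℝ, (M - m) / 2 ≤ ‖a - l • e‖ := by
    intro l
    rw [hnorm' l]
    have h1 : M - l ≤ ⨆ ω : S, |f ω - l| := by
      rw [sub_le_iff_le_add]
      refine ciSup_le fun ω => ?_
      have : f ω - l ≤ |f ω - l| := le_abs_self _
      have h2 := le_ciSup (hAbs l) ω
      linarith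
    have h2 : l - m ≤ ⨆ ω : S, |f ω - l| := by
      rw [sub_le_iff_le_add, ← sub_le_iff_le_add']
      refine le_ciInf fun ω => ?_
      have : l - f ω ≤ |f ω - l| := by
        rw [abs_sub_comm]; exact le_abs_self _
      have h3 := le_ciSup (hAbs l) ω
      linarith
    linarith
  -- value at the midpoint
  have hmid : ‖a - ((M + m) / 2) • e‖ ≤ (M - m) / 2 := by
    rw [hnorm' _]
    refine ciSup_le fun ω => ?_
    have h1 : f ω ≤ M := le_ciSup hAbove ω
    have h2 : m ≤ f ω := ciInf_le hBelow ω
    rw [abs_le]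
    constructor <;> linarith
  have hBelowNorm : BddBelow (Set.range fun l : ℝ => ‖a - l • e‖) := by
    refine ⟨0, ?_⟩
    rintro x ⟨l, rfl⟩
    exact norm_nonneg _
  refine le_antisymm ?_ ?_
  · exact le_trans (ciInf_le hBelowNorm ((M + m) / 2)) hmid
  · exact le_ciInf hlow
end

section
/- Let (X, e) be an order-unit space whose norm satisfies ‖a‖ = inf{r ∈ ℝ : −re ≤ a ≤ re}, assume S(X) is nonempty, and assume ‖b‖ = sup_{ω ∈ S(X)} |ω(b)| for all b ∈ X. Let L : X → [0,∞] be subadditive and absolutely homogeneous with L(a) = 0 if and only if a = λe for some λ ∈ ℝ. Define ρ_L(ω₁,ω₂) = sup_{a : L(a) ≤ 1} |ω₁(a) − ω₂(a)| and ‖a‖₀ = inf_{λ∈ℝ} ‖a − λe‖. Then the diameter of the state space satisfies sup_{ω₁,ω₂ ∈ S(X)} ρ_L(ω₁,ω₂) = sup_{a : L(a) ≠ 0} 2‖a‖₀ / L(a) (equality in [0,∞]). -/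
open scoped ENNReal NNReal

lemma stmt12aux {X : Type*} [NormedAddCommGroup X] [NormedSpace ℝ X] (e : X)
    (hne : Nonempty {ω : X →L[ℝ] ℝ // ω e = 1 ∧ ‖ω‖ = 1})
    (hkad : ∀ b : X, ‖b‖ = ⨆ ω : {ω : X →L[ℝ] ℝ // ω e = 1 ∧ ‖ω‖ = 1}, |ω.1 b|)
    (b : X) :
    (⨆ ω₁ : {ω : X →L[ℝ] ℝ // ω e = 1 ∧ ‖ω‖ = 1},
      ⨆ ω₂ : {ω : X →L[ℝ] ℝ // ω e = 1 ∧ ‖ω‖ = 1}, (‖ω₁.1 b - ω₂.1 b‖₊ : ℝ≥0∞))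
      = 2 * ⨅ l : ℝ, (‖b - l • e‖₊ : ℝ≥0∞) := by
  set S := {ω : X →L[ℝ] ℝ // ω e = 1 ∧ ‖ω‖ = 1}
  haveI : Nonempty S := hne
  -- basic bound
  have habs : ∀ (c : X) (ω : S), |ω.1 c| ≤ ‖c‖ := by
    intro c ω
    have := ω.1.le_opNorm c
    rwa [ω.2.2, one_mul, Real.norm_eq_abs] at this
  have hbddA : ∀ c : X, BddAbove (Set.range fun ω : S => ω.1 c) := by
    intro c
    refine ⟨‖c‖, ?_⟩
    rintro _ ⟨ω, rfl⟩
    exact (abs_le.1 (habs c ω)).2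
  have hbddB : ∀ c : X, BddBelow (Set.range fun ω : S => ω.1 c) := by
    intro c
    refine ⟨-‖c‖, ?_⟩
    rintro _ ⟨ω, rfl⟩
    exact (abs_le.1 (habs c ω)).1
  set M : ℝ := ⨆ ω : S, ω.1 b with hM
  set m : ℝ := ⨅ ω : S, ω.1 b with hm
  obtain ⟨ω₀⟩ := hne
  have hmM : m ≤ M := le_trans (ciInf_le (hbddB b) ω₀) (le_ciSup (hbddA b) ω₀)
  have hval : ∀ (l : ℝ) (ω : S), ω.1 (b - l • e) = ω.1 b - l := by
    intro l ω
    rw [map_sub, map_smul, ω.2.1, smul_eq_mul, mul_one]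
  -- norm formula
  have hsn : ∀ l : ℝ, ‖b - l • e‖ = max (M - l) (l - m) := by
    intro l
    rw [hkad (b - l • e)]
    have hrw : (fun ω : S => |ω.1 (b - l • e)|) = fun ω : S => |ω.1 b - l| := by
      funext ω; rw [hval]
    rw [hrw]
    have hbdd' : BddAbove (Set.range fun ω : S => |ω.1 b - l|) := by
      refine ⟨‖b - l • e‖, ?_⟩
      rintro _ ⟨ω, rfl⟩
      dsimp only
      rw [← hval l ω]; exact habs _ ω
    apply le_antisymm
    · refine ciSup_le fun ω => ?_
      rw [abs_sub_le_iff]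
      constructor
      · have := le_ciSup (hbddA b) ω
        have h2 : (M - l) ≤ max (M - l) (l - m) := le_max_left _ _
        have h3 : (l - m) ≤ max (M - l) (l - m) := le_max_right _ _
        linarith [le_ciSup (hbddA b) ω]
      · have h3 : (l - m) ≤ max (M - l) (l - m) := le_max_right _ _
        linarith [ciInf_le (hbddB b) ω]
    · refine max_le ?_ ?_
      · rw [sub_le_iff_le_add]
        refine ciSup_le fun ω => ?_
        have h1 : |ω.1 b - l| ≤ ⨆ ω : S, |ω.1 b - l| := le_ciSup hbdd' ω
        have h2 : ω.1 b - l ≤ |ω.1 b - l| := le_abs_self _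
        linarith
      · rw [sub_le_iff_le_add]
        have : m ≥ l - ⨆ ω : S, |ω.1 b - l| := by
          refine le_ciInf fun ω => ?_
          have h1 : |ω.1 b - l| ≤ ⨆ ω : S, |ω.1 b - l| := le_ciSup hbdd' ω
          have h2 : l - ω.1 b ≤ |ω.1 b - l| := by
            rw [abs_sub_comm]; exact le_abs_self _
          linarith
        linarith
  -- infimum of norms
  have hInf : (⨅ l : ℝ, ‖b - l • e‖) = (M - m) / 2 := by
    apply le_antisymm
    · have := ciInf_le (f := fun l : ℝ => ‖b - l • e‖)
        ⟨0, by rintro _ ⟨l, rfl⟩; exact norm_nonneg _⟩ ((M + m) / 2)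
      refine this.trans_eq ?_
      rw [hsn]
      have h1 : M - (M + m) / 2 = (M - m) / 2 := by ring
      have h2 : (M + m) / 2 - m = (M - m) / 2 := by ring
      rw [h1, h2, max_self]
    · refine le_ciInf fun l => ?_
      rw [hsn]
      have h1 : M - l ≤ max (M - l) (l - m) := le_max_left _ _
      have h2 : l - m ≤ max (M - l) (l - m) := le_max_right _ _
      linarith
  -- real double sup
  have hbddI : ∀ ω₁ : S, BddAbove (Set.range fun ω₂ : S => |ω₁.1 b - ω₂.1 b|) := by
    intro ω₁
    refine ⟨2 * ‖b‖, ?_⟩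
    rintro _ ⟨ω₂, rfl⟩
    have := habs b ω₁; have := habs b ω₂
    have := abs_sub (ω₁.1 b) (ω₂.1 b)
    calc |ω₁.1 b - ω₂.1 b| ≤ |ω₁.1 b| + |ω₂.1 b| := abs_sub _ _
      _ ≤ 2 * ‖b‖ := by linarith [habs b ω₁, habs b ω₂]
  have hbddO : BddAbove (Set.range fun ω₁ : S => ⨆ ω₂ : S, |ω₁.1 b - ω₂.1 b|) := by
    refine ⟨2 * ‖b‖, ?_⟩
    rintro _ ⟨ω₁, rfl⟩
    refine ciSup_le fun ω₂ => ?_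
    calc |ω₁.1 b - ω₂.1 b| ≤ |ω₁.1 b| + |ω₂.1 b| := abs_sub _ _
      _ ≤ 2 * ‖b‖ := by linarith [habs b ω₁, habs b ω₂]
  have hE : (⨆ ω₁ : S, ⨆ ω₂ : S, |ω₁.1 b - ω₂.1 b|) = M - m := by
    apply le_antisymm
    · refine ciSup_le fun ω₁ => ciSup_le fun ω₂ => ?_
      rw [abs_sub_le_iff]
      constructor
      · linarith [le_ciSup (hbddA b) ω₁, ciInf_le (hbddB b) ω₂]
      · linarith [le_ciSup (hbddA b) ω₂, ciInf_le (hbddB b) ω₁]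
    · set T := ⨆ ω₁ : S, ⨆ ω₂ : S, |ω₁.1 b - ω₂.1 b| with hT
      have h1 : ∀ ω₁ ω₂ : S, |ω₁.1 b - ω₂.1 b| ≤ T :=
        fun ω₁ ω₂ => (le_ciSup (hbddI ω₁) ω₂).trans (le_ciSup hbddO ω₁)
      have h2 : ∀ ω₁ : S, ω₁.1 b ≤ T + m := by
        intro ω₁
        have : ω₁.1 b - T ≤ m := by
          refine le_ciInf fun ω₂ => ?_
          have := h1 ω₁ ω₂
          have := le_abs_self (ω₁.1 b - ω₂.1 b)
          linarith
        linarith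
      have h3 : M ≤ T + m := ciSup_le h2
      linarith
  -- now convert to ENNReal
  have key1 : (⨆ ω₁ : S, ⨆ ω₂ : S, (‖ω₁.1 b - ω₂.1 b‖₊ : ℝ≥0∞)) = ENNReal.ofReal (M - m) := by
    have hbN : ∀ ω₁ : S, BddAbove (Set.range fun ω₂ : S => ‖ω₁.1 b - ω₂.1 b‖₊) := by
      intro ω₁
      refine ⟨(2 * ‖b‖).toNNReal, ?_⟩
      rintro _ ⟨ω₂, rfl⟩
      rw [← NNReal.coe_le_coe, coe_nnnorm, Real.norm_eq_abs,
        Real.coe_toNNReal _ (by positivity)]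
      calc |ω₁.1 b - ω₂.1 b| ≤ |ω₁.1 b| + |ω₂.1 b| := abs_sub _ _
        _ ≤ 2 * ‖b‖ := by linarith [habs b ω₁, habs b ω₂]
    have hbO : BddAbove (Set.range fun ω₁ : S => ⨆ ω₂ : S, ‖ω₁.1 b - ω₂.1 b‖₊) := by
      refine ⟨(2 * ‖b‖).toNNReal, ?_⟩
      rintro _ ⟨ω₁, rfl⟩
      refine ciSup_le fun ω₂ => ?_
      rw [← NNReal.coe_le_coe, coe_nnnorm, Real.norm_eq_abs,
        Real.coe_toNNReal _ (by positivity)]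
      calc |ω₁.1 b - ω₂.1 b| ≤ |ω₁.1 b| + |ω₂.1 b| := abs_sub _ _
        _ ≤ 2 * ‖b‖ := by linarith [habs b ω₁, habs b ω₂]
    have step : ∀ ω₁ : S, (⨆ ω₂ : S, (‖ω₁.1 b - ω₂.1 b‖₊ : ℝ≥0∞))
        = (((⨆ ω₂ : S, ‖ω₁.1 b - ω₂.1 b‖₊) : ℝ≥0) : ℝ≥0∞) := by
      intro ω₁; exact (ENNReal.coe_iSup (hbN ω₁)).symm
    calc (⨆ ω₁ : S, ⨆ ω₂ : S, (‖ω₁.1 b - ω₂.1 b‖₊ : ℝ≥0∞))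
        = ⨆ ω₁ : S, (((⨆ ω₂ : S, ‖ω₁.1 b - ω₂.1 b‖₊) : ℝ≥0) : ℝ≥0∞) := by
          exact iSup_congr step
      _ = (((⨆ ω₁ : S, ⨆ ω₂ : S, ‖ω₁.1 b - ω₂.1 b‖₊) : ℝ≥0) : ℝ≥0∞) :=
          (ENNReal.coe_iSup hbO).symm
      _ = ENNReal.ofReal (M - m) := by
          rw [ENNReal.ofReal]
          congr 1
          apply NNReal.coe_injective
          rw [Real.coe_toNNReal _ (by linarith), NNReal.coe_iSup]
          rw [← hE]
          refine congrArg _ (funext fun ω₁ => ?_)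
          rw [NNReal.coe_iSup]
          exact congrArg _ (funext fun ω₂ => by rw [coe_nnnorm, Real.norm_eq_abs])
  have key2 : (2 * ⨅ l : ℝ, (‖b - l • e‖₊ : ℝ≥0∞)) = ENNReal.ofReal (M - m) := by
    rw [← ENNReal.coe_iInf]
    have h4 : (⨅ l : ℝ, ‖b - l • e‖₊) = ((M - m) / 2).toNNReal := by
      apply NNReal.coe_injective
      rw [Real.coe_toNNReal _ (by linarith), NNReal.coe_iInf, ← hInf]
      exact congrArg _ (funext fun l => by rw [coe_nnnorm])
    rw [h4]
    rw [show ((Real.toNNReal ((M - m) / 2) : ℝ≥0) : ℝ≥0∞) = ENNReal.ofReal ((M - m)/2) from rfl]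
    rw [← ENNReal.ofReal_ofNat 2, ← ENNReal.ofReal_mul (by norm_num)]
    congr 1; ring
  rw [key1, key2]


/-- Let `(X, e)` be an order-unit space (Archimedean partially ordered
real vector space with order unit `e`) whose norm is `‖a‖ = inf {r : −r•e ≤ a ≤ r•e}`,
with nonempty state space `S(X) = {ω : ω(e) = ‖ω‖ = 1}` satisfying Kadison's formula
`‖b‖ = sup_{ω ∈ S(X)} |ω(b)|`.  Let `L : X → [0,∞]` be subadditive and absolutely
homogeneous with `L(a) = 0` iff `a ∈ ℝe`, let
`ρ_L(ω₁,ω₂) = sup_{L(a) ≤ 1} |ω₁(a) − ω₂(a)|` and `‖a‖₀ = inf_λ ‖a − λ•e‖`.  Then the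
diameter of the state space satisfies (as an equality in `[0,∞]`)
`sup_{ω₁,ω₂ ∈ S(X)} ρ_L(ω₁,ω₂) = sup_{L(a) ≠ 0} 2‖a‖₀/L(a)`. -/
theorem stmt12 {X : Type*} [NormedAddCommGroup X] [NormedSpace ℝ X] [PartialOrder X]
    (e : X)
    (hadd : ∀ a b c : X, a ≤ b → a + c ≤ b + c)
    (hsmul : ∀ (t : ℝ) (a : X), 0 ≤ t → 0 ≤ a → 0 ≤ t • a)
    (hunit : ∀ a : X, ∃ r : ℝ, a ≤ r • e)
    (harch : ∀ a : X, (∀ r : ℝ, 0 < r → a ≤ r • e) → a ≤ 0)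
    (hnorm : ∀ a : X, ‖a‖ = sInf {r : ℝ | -(r • e) ≤ a ∧ a ≤ r • e})
    (hne : Nonempty {ω : X →L[ℝ] ℝ // ω e = 1 ∧ ‖ω‖ = 1})
    (hkad : ∀ b : X, ‖b‖ = ⨆ ω : {ω : X →L[ℝ] ℝ // ω e = 1 ∧ ‖ω‖ = 1}, |ω.1 b|)
    (L : X → ℝ≥0∞)
    (hLadd : ∀ a b : X, L (a + b) ≤ L a + L b)
    (hLsmul : ∀ (t : ℝ) (a : X), L (t • a) = (‖t‖₊ : ℝ≥0∞) * L a)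
    (hL0 : ∀ a : X, L a = 0 ↔ ∃ l : ℝ, a = l • e) :
    (⨆ ω₁ : {ω : X →L[ℝ] ℝ // ω e = 1 ∧ ‖ω‖ = 1},
        ⨆ ω₂ : {ω : X →L[ℝ] ℝ // ω e = 1 ∧ ‖ω‖ = 1},
          ⨆ a : {a : X // L a ≤ 1}, (‖ω₁.1 a.1 - ω₂.1 a.1‖₊ : ℝ≥0∞)) =
      ⨆ a : {a : X // L a ≠ 0}, 2 * (⨅ l : ℝ, (‖a.1 - l • e‖₊ : ℝ≥0∞)) / L a.1 := by
  have key := stmt12aux e hne hkad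
  apply le_antisymm
  · refine iSup_le fun ω₁ => iSup_le fun ω₂ => iSup_le fun a => ?_
    obtain ⟨a, ha⟩ := a
    by_cases h0 : L a = 0
    · obtain ⟨l, rfl⟩ := (hL0 a).1 h0
      have h1 : ω₁.1 (l • e) = l := by rw [map_smul, ω₁.2.1, smul_eq_mul, mul_one]
      have h2 : ω₂.1 (l • e) = l := by rw [map_smul, ω₂.2.1, smul_eq_mul, mul_one]
      simp [h1, h2]
    · have hfin : L a ≠ ⊤ := (ha.trans_lt ENNReal.one_lt_top).ne
      calc (‖ω₁.1 a - ω₂.1 a‖₊ : ℝ≥0∞)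
          ≤ ⨆ ω₁' : {ω : X →L[ℝ] ℝ // ω e = 1 ∧ ‖ω‖ = 1},
              ⨆ ω₂' : {ω : X →L[ℝ] ℝ // ω e = 1 ∧ ‖ω‖ = 1},
                (‖ω₁'.1 a - ω₂'.1 a‖₊ : ℝ≥0∞) :=
            le_trans
              (le_iSup (fun ω₂' : {ω : X →L[ℝ] ℝ // ω e = 1 ∧ ‖ω‖ = 1} =>
                (‖ω₁.1 a - ω₂'.1 a‖₊ : ℝ≥0∞)) ω₂)
              (le_iSup (fun ω₁' : {ω : X →L[ℝ] ℝ // ω e = 1 ∧ ‖ω‖ = 1} =>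
                ⨆ ω₂' : {ω : X →L[ℝ] ℝ // ω e = 1 ∧ ‖ω‖ = 1},
                  (‖ω₁'.1 a - ω₂'.1 a‖₊ : ℝ≥0∞)) ω₁)
        _ = 2 * ⨅ l : ℝ, (‖a - l • e‖₊ : ℝ≥0∞) := key a
        _ ≤ 2 * (⨅ l : ℝ, (‖a - l • e‖₊ : ℝ≥0∞)) / L a := by
            rw [ENNReal.le_div_iff_mul_le (Or.inl h0) (Or.inl hfin)]
            calc (2 * ⨅ l : ℝ, (‖a - l • e‖₊ : ℝ≥0∞)) * L a
                ≤ (2 * ⨅ l : ℝ, (‖a - l • e‖₊ : ℝ≥0∞)) * 1 := mul_le_mul_right ha _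
              _ = 2 * ⨅ l : ℝ, (‖a - l • e‖₊ : ℝ≥0∞) := mul_one _
        _ ≤ _ := le_iSup (fun a' : {a : X // L a ≠ 0} =>
            2 * (⨅ l : ℝ, (‖a'.1 - l • e‖₊ : ℝ≥0∞)) / L a'.1) ⟨a, h0⟩
  · refine iSup_le fun a => ?_
    obtain ⟨a, ha⟩ := a
    by_cases htop : L a = ⊤
    · simp [htop, ENNReal.div_top]
    · set c := (L a).toReal with hc
      have hc0 : 0 < c := ENNReal.toReal_pos ha htop
      have hcnn : ‖c‖₊ ≠ 0 := nnnorm_ne_zero_iff.2 hc0.ne'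
      have hLa : L a = (‖c‖₊ : ℝ≥0∞) := by
        rw [← ENNReal.coe_toNNReal htop]
        congr 1
        apply NNReal.coe_injective
        rw [coe_nnnorm, Real.norm_eq_abs, abs_of_pos hc0]
        rfl
      set b := c⁻¹ • a with hb
      have hLb : L b ≤ 1 := by
        rw [hb, hLsmul, nnnorm_inv, hLa, ← ENNReal.coe_mul,
          inv_mul_cancel₀ hcnn, ENNReal.coe_one]
      have hnb : ∀ ω₁ ω₂ : {ω : X →L[ℝ] ℝ // ω e = 1 ∧ ‖ω‖ = 1},
          (‖ω₁.1 b - ω₂.1 b‖₊ : ℝ≥0∞) = (‖c⁻¹‖₊ : ℝ≥0∞) * ‖ω₁.1 a - ω₂.1 a‖₊ := by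
        intro ω₁ ω₂
        rw [hb, map_smul, map_smul, smul_eq_mul, smul_eq_mul, ← mul_sub, nnnorm_mul,
          ENNReal.coe_mul]
      calc 2 * (⨅ l : ℝ, (‖a - l • e‖₊ : ℝ≥0∞)) / L a
          = (‖c⁻¹‖₊ : ℝ≥0∞) * (2 * ⨅ l : ℝ, (‖a - l • e‖₊ : ℝ≥0∞)) := by
            rw [div_eq_mul_inv, hLa, ← ENNReal.coe_inv hcnn, ← nnnorm_inv, mul_comm]
        _ = (‖c⁻¹‖₊ : ℝ≥0∞) * ⨆ ω₁ : {ω : X →L[ℝ] ℝ // ω e = 1 ∧ ‖ω‖ = 1},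
              ⨆ ω₂ : {ω : X →L[ℝ] ℝ // ω e = 1 ∧ ‖ω‖ = 1},
                (‖ω₁.1 a - ω₂.1 a‖₊ : ℝ≥0∞) := by rw [key a]
        _ = ⨆ ω₁ : {ω : X →L[ℝ] ℝ // ω e = 1 ∧ ‖ω‖ = 1},
              ⨆ ω₂ : {ω : X →L[ℝ] ℝ // ω e = 1 ∧ ‖ω‖ = 1},
                (‖ω₁.1 b - ω₂.1 b‖₊ : ℝ≥0∞) := by
            rw [ENNReal.mul_iSup]
            refine iSup_congr fun ω₁ => ?_
            rw [ENNReal.mul_iSup]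
            exact iSup_congr fun ω₂ => (hnb ω₁ ω₂).symm
        _ ≤ _ := iSup_mono fun ω₁ => iSup_mono fun ω₂ =>
            le_iSup (fun a' : {a : X // L a ≤ 1} => (‖ω₁.1 a'.1 - ω₂.1 a'.1‖₊ : ℝ≥0∞)) ⟨b, hLb⟩
end

section
/- Let 𝒜 be the unital C*-algebra of sequences A = (A_k)_{k≥1} of 2×2 complex matrices converging in norm to a scalar multiple of the identity, with supremum norm ‖A‖ = sup_k ‖A_k‖, and let L(A) = inf_{λ∈ℂ} sup_k k‖A_k − λI‖ ∈ [0,∞]. Then the set {A ∈ 𝒜 : L(A) ≤ 1 and ‖A‖ ≤ 1} is totally bounded in the supremum norm. -/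
/-! If `L(A) ≤ 1` then `‖A_k - λ·1‖ ≤ 2/k` for some scalar `λ`, and `‖A‖ ≤ 1` forces `|λ| ≤ 3`.
So past an index `N` depending only on `ε`, every such `A` is uniformly `ε/2`-close to a constant
tail `λ·1`, and the truncated sequences are determined by `N + 1` matrices in a compact ball of
`M₂(ℂ)`, a totally bounded family. -/

open scoped ENNReal NNReal Matrix Matrix.Norms.L2Operator
open Filter

/-- Membership in the C*-algebra `𝒜` of sequences of `2×2` complex matrices (indexed by
`k ≥ 1`, here realised as `k+1` for `k : ℕ`) converging in (operator) norm to a scalar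
multiple of the identity. -/
def ConvToScalar (A : ℕ → Matrix (Fin 2) (Fin 2) ℂ) : Prop :=
  ∃ α : ℂ, Tendsto A atTop (nhds (α • (1 : Matrix (Fin 2) (Fin 2) ℂ)))

/-- The weighted norm `|||A||| = sup_k k ‖A_k‖ ∈ [0,∞]` (the index `k : ℕ` stands for the
`(k+1)`-st term of the sequence). -/
noncomputable def tripleNorm (A : ℕ → Matrix (Fin 2) (Fin 2) ℂ) : ℝ≥0∞ :=
  ⨆ k : ℕ, ((k : ℝ≥0∞) + 1) * (‖A k‖₊ : ℝ≥0∞)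

/-- The Lip-seminorm `L(A) = inf_{λ ∈ ℂ} |||A − λ·1|||`. -/
noncomputable def Lsem (A : ℕ → Matrix (Fin 2) (Fin 2) ℂ) : ℝ≥0∞ :=
  ⨅ l : ℂ, tripleNorm (fun k => A k - l • (1 : Matrix (Fin 2) (Fin 2) ℂ))

theorem IsCompact.exists_finset_forall_dist_lt_of_forall_ge_eq {E : Type*} [PseudoMetricSpace E]
    {K : Set E} (hK : IsCompact K) (N : ℕ) {ε : ℝ} (hε : 0 < ε) :
    ∃ s : Finset (ℕ → E), ∀ f : ℕ → E, (∀ k, f k ∈ K) → (∀ k ≥ N, f k = f N) →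
      ∃ B ∈ s, ∀ k, dist (f k) (B k) < ε := by
  classical
  let extend : (Fin (N + 1) → E) → ℕ → E := fun g k => g ⟨min k N, by omega⟩
  obtain ⟨t, -, ht, hcover⟩ := Metric.finite_approx_of_totallyBounded
    (isCompact_univ_pi fun _ : Fin (N + 1) => hK).totallyBounded ε hε
  refine ⟨ht.toFinset.image extend, fun f hfK hconst => ?_⟩
  obtain ⟨g, hg, hfg⟩ := Set.mem_iUnion₂.mp
    (hcover (show (fun i : Fin (N + 1) => f i) ∈ _ from fun i _ => hfK i))
  refine ⟨extend g, Finset.mem_image_of_mem _ (ht.mem_toFinset.mpr hg), fun k => ?_⟩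
  have hfk : f k = f (min k N) := by
    rcases le_total k N with hk | hk
    · rw [min_eq_left hk]
    · rw [min_eq_right hk, hconst k hk]
  rw [hfk]
  exact (dist_le_pi_dist (fun i : Fin (N + 1) => f i) g ⟨min k N, by omega⟩).trans_lt hfg

theorem norm_le_of_tripleNorm_le {B : ℕ → Matrix (Fin 2) (Fin 2) ℂ} {C : ℝ≥0}
    (h : tripleNorm B ≤ C) (k : ℕ) : ‖B k‖ ≤ C / (k + 1) := by
  have hk := (le_iSup (fun j : ℕ => ((j : ℝ≥0∞) + 1) * (‖B j‖₊ : ℝ≥0∞)) k).trans h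
  rw [le_div_iff₀ (by positivity), mul_comm]
  exact_mod_cast (ENNReal.toReal_le_toReal (by finiteness) (by simp)).mpr hk

theorem exists_tripleNorm_sub_smul_one_le_two {A : ℕ → Matrix (Fin 2) (Fin 2) ℂ}
    (h : Lsem A ≤ 1) : ∃ l : ℂ, tripleNorm (fun k => A k - l • 1) ≤ (2 : ℝ≥0) := by
  obtain ⟨l, hl⟩ := iInf_lt_iff.mp (h.trans_lt (by norm_num : (1 : ℝ≥0∞) < (2 : ℝ≥0)))
  exact ⟨l, hl.le⟩

/-- In the C*-algebra `𝒜` of sequences of `2×2` complex matrices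
converging in norm to a scalar multiple of the identity, the set
`{A ∈ 𝒜 : L(A) ≤ 1, ‖A‖ ≤ 1}` is totally bounded in the supremum norm: for every
`ε > 0` there is a finite `ε`-net. -/
theorem stmt14 :
    ∀ ε : ℝ, 0 < ε → ∃ s : Finset (ℕ → Matrix (Fin 2) (Fin 2) ℂ),
      ∀ A : ℕ → Matrix (Fin 2) (Fin 2) ℂ,
        ConvToScalar A → Lsem A ≤ 1 → (∀ k, ‖A k‖ ≤ 1) →
          ∃ B ∈ s, ∀ k, ‖A k - B k‖ ≤ ε := by
  intro ε hε
  obtain ⟨N, hN⟩ := exists_nat_one_div_lt (by positivity : 0 < ε / 4)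
  obtain ⟨s, hs⟩ := (isCompact_closedBall (0 : Matrix (Fin 2) (Fin 2) ℂ) 3)
    |>.exists_finset_forall_dist_lt_of_forall_ge_eq N (half_pos hε)
  refine ⟨s, fun A _ hL hA => ?_⟩
  obtain ⟨l, hl⟩ := exists_tripleNorm_sub_smul_one_le_two hL
  have hl_close : ∀ k : ℕ, ‖A k - l • 1‖ ≤ 2 / ((k : ℝ) + 1) := by
    exact_mod_cast norm_le_of_tripleNorm_le hl
  have hl_norm : ‖l • (1 : Matrix (Fin 2) (Fin 2) ℂ)‖ ≤ 3 := by
    linarith [norm_le_norm_add_norm_sub (A 0) (l • 1), hA 0, hl_close 0]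
  have htail : ∀ k ≥ N, ‖A k - l • 1‖ ≤ ε / 2 := fun k hk => calc
    ‖A k - l • 1‖ ≤ 2 / ((k : ℝ) + 1) := hl_close k
    _ ≤ 2 * (1 / ((N : ℝ) + 1)) := by rw [mul_one_div]; gcongr
    _ ≤ ε / 2 := by linarith
  obtain ⟨B, hB, hAB⟩ := hs (fun k => if k < N then A k else l • 1)
    (fun k => mem_closedBall_zero_iff.mpr <| by
      split_ifs
      exacts [by linarith [hA k], hl_norm])
    (fun k hk => by simp [not_lt.mpr hk])
  refine ⟨B, hB, fun k => ?_⟩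
  have hfB := hAB k
  rw [dist_eq_norm] at hfB
  split_ifs at hfB with hk
  · linarith
  · linarith [norm_sub_le_norm_sub_add_norm_sub (A k) (l • 1) (B k), htail k (not_lt.mp hk)]
end

section
/- Let 𝒜 be the unital C*-algebra of sequences A = (A_k)_{k≥1} of 2×2 complex matrices converging in norm to a scalar multiple of the identity, and let L(A) = inf_{λ∈ℂ} sup_k k‖A_k − λI‖ ∈ [0,∞]. Let A ∈ 𝒜 be the sequence A_k = [[0, 1/k],[0, 0]]. Then L(A) = 1, while sup_k k³·|(A_k* A_k)₁₁ − (A_k* A_k)₂₂| = ∞ (the diagonal-difference seminorms ℓ_k(B) = k³|b₁₁ − b₂₂| are unbounded along A*A). In particular, L(A) is finite but the Lip-seminorm L_∞(B) = max{L(B), sup_k k³|(B_k)₁₁ − (B_k)₂₂|} satisfies L_∞(A*A) = ∞. -/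
open scoped ENNReal NNReal Matrix Matrix.Norms.L2Operator
open Filter

/-!
The `(1,2)` entry of `A_1 - λ` is `1` whatever `λ` is, and an entry never exceeds the operator
norm, so the first term alone forces `L(A) ≥ 1`. Conversely `A_k` is `1/k` times a matrix unit,
and the C*-identity `‖A_kᴴ A_k‖ = ‖A_k‖²` with `A_kᴴ A_k = diag(0, 1/k²)` gives `‖A_k‖ = 1/k`,
so `λ = 0` shows `L(A) ≤ 1`. The same Gram matrix has diagonal gap `1/k²`, which the weight `k³`
turns into `k`.
-/

namespace Matrix

variable {𝕜 m n : Type*} [RCLike 𝕜] [Fintype m] [Fintype n] [DecidableEq n]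

theorem norm_apply_le_l2_opNorm (A : Matrix m n 𝕜) (i : m) (j : n) : ‖A i j‖ ≤ ‖A‖ := by
  have h := A.l2_opNorm_mulVec (PiLp.single 2 j 1)
  rw [PiLp.norm_single, norm_one, mul_one] at h
  have hcol : ((EuclideanSpace.equiv m 𝕜).symm (A *ᵥ (PiLp.single 2 j (1 : 𝕜)).ofLp)).ofLp i
      = A i j := by
    simp [mulVec_single]
  exact hcol ▸ (PiLp.norm_apply_le _ i).trans h

omit [Fintype n] in
theorem conjTranspose_mul_self_single [DecidableEq m] (i : m) (j : n) (c : 𝕜) :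
    (single i j c)ᴴ * single i j c = single j j (star c * c) := by
  rw [conjTranspose_single, single_mul_single_same]

theorem l2_opNorm_single [DecidableEq m] (i : m) (j : n) (c : 𝕜) : ‖single i j c‖ = ‖c‖ := by
  have h := l2_opNorm_conjTranspose_mul_self (single i j c)
  rw [conjTranspose_mul_self_single, ← diagonal_single, l2_opNorm_diagonal, Pi.norm_single,
    norm_mul, norm_star] at h
  exact (mul_self_inj (norm_nonneg _) (norm_nonneg _)).1 h.symm

theorem l2_opNNNorm_single [DecidableEq m] (i : m) (j : n) (c : 𝕜) : ‖single i j c‖₊ = ‖c‖₊ :=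
  Subtype.ext <| l2_opNorm_single i j c

theorem single_zero_one_fin_two {α : Type*} [Zero α] (c : α) :
    single (0 : Fin 2) 1 c = !![0, c; 0, 0] := by
  ext i j
  fin_cases i <;> fin_cases j <;> rfl

end Matrix

open Matrix

theorem Lsem_le_tripleNorm (A : ℕ → Matrix (Fin 2) (Fin 2) ℂ) : Lsem A ≤ tripleNorm A :=
  (iInf_le _ 0).trans_eq <| by simp only [zero_smul, sub_zero]

theorem mul_nnnorm_apply_le_Lsem (A : ℕ → Matrix (Fin 2) (Fin 2) ℂ) (k : ℕ) {i j : Fin 2}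
    (hij : i ≠ j) : ((k : ℝ≥0∞) + 1) * ‖A k i j‖₊ ≤ Lsem A := by
  refine le_iInf fun l => le_iSup_of_le k ?_
  have hentry : (A k - l • 1) i j = A k i j := by simp [one_apply_ne hij]
  gcongr
  rw [← hentry]
  exact norm_apply_le_l2_opNorm _ i j

theorem nnnorm_one_div_natCast_add_one (k : ℕ) :
    (‖1 / ((k : ℂ) + 1)‖₊ : ℝ≥0∞) = ((k : ℝ≥0∞) + 1)⁻¹ := by
  rw [one_div, nnnorm_inv, ← Nat.cast_succ, Complex.nnnorm_natCast,
    ENNReal.coe_inv (by positivity)]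
  push_cast
  rfl

noncomputable def nilpotentSeq (k : ℕ) : Matrix (Fin 2) (Fin 2) ℂ :=
  single 0 1 (1 / ((k : ℂ) + 1))

theorem Lsem_nilpotentSeq : Lsem nilpotentSeq = 1 := by
  have hweight : ∀ k : ℕ, ((k : ℝ≥0∞) + 1) * ‖nilpotentSeq k‖₊ = 1 := fun k => by
    rw [nilpotentSeq, l2_opNNNorm_single, nnnorm_one_div_natCast_add_one,
      ENNReal.mul_inv_cancel (by positivity) (by simp)]
  refine le_antisymm ((Lsem_le_tripleNorm _).trans (iSup_le fun k => (hweight k).le)) ?_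
  simpa [nilpotentSeq] using mul_nnnorm_apply_le_Lsem nilpotentSeq 0 zero_ne_one

theorem iSup_cube_mul_nnnorm_diag_sub_nilpotentSeq :
    (⨆ k : ℕ, ((k : ℝ≥0∞) + 1) ^ 3 *
      (‖((nilpotentSeq k)ᴴ * nilpotentSeq k) 0 0 - ((nilpotentSeq k)ᴴ * nilpotentSeq k) 1 1‖₊
        : ℝ≥0∞)) = ⊤ := by
  have hterm : ∀ k : ℕ, ((k : ℝ≥0∞) + 1) ^ 3 *
      (‖((nilpotentSeq k)ᴴ * nilpotentSeq k) 0 0 - ((nilpotentSeq k)ᴴ * nilpotentSeq k) 1 1‖₊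
        : ℝ≥0∞) = k + 1 := fun k => by
    set a : ℝ≥0∞ := (k : ℝ≥0∞) + 1
    have ha : a ≠ 0 := by positivity
    have ha' : a ≠ ⊤ := by simp [a]
    rw [nilpotentSeq, conjTranspose_mul_self_single]
    simp only [single_apply_same, single_apply_of_row_ne (one_ne_zero (α := Fin 2)), zero_sub,
      nnnorm_neg, nnnorm_mul, nnnorm_star, ENNReal.coe_mul, nnnorm_one_div_natCast_add_one]
    calc a ^ 3 * (a⁻¹ * a⁻¹) = a * (a * a⁻¹) * (a * a⁻¹) := by ring
      _ = a := by rw [ENNReal.mul_inv_cancel ha ha', mul_one, mul_one]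
  rw [iSup_congr hterm, eq_top_iff, ← ENNReal.iSup_natCast]
  exact iSup_mono fun k => le_self_add

/-- For the sequence `A_k = [[0, 1/k],[0,0]]` (here the `k`-th term,
`k ≥ 1`, is realised at index `k-1 : ℕ`) one has `L(A) = 1`, while the diagonal-difference
seminorms `ℓ_k(B) = k³|b₁₁ − b₂₂|` are unbounded along `A*A`:
`sup_k k³ |(A_k*A_k)₁₁ − (A_k*A_k)₂₂| = ∞`.  In particular `L(A)` is finite but
`L_∞(A*A) = max{L(A*A), sup_k k³|(A*A)_{k,11} − (A*A)_{k,22}|} = ∞`. -/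
theorem stmt15 :
    let A : ℕ → Matrix (Fin 2) (Fin 2) ℂ := fun k => !![0, 1/((k : ℂ) + 1); 0, 0]
    Lsem A = 1 ∧
      (⨆ k : ℕ, ((k : ℝ≥0∞) + 1) ^ 3 *
        (‖((A k)ᴴ * A k) 0 0 - ((A k)ᴴ * A k) 1 1‖₊ : ℝ≥0∞)) = ⊤ ∧
      max (Lsem (fun k => (A k)ᴴ * A k))
        (⨆ k : ℕ, ((k : ℝ≥0∞) + 1) ^ 3 *
          (‖((A k)ᴴ * A k) 0 0 - ((A k)ᴴ * A k) 1 1‖₊ : ℝ≥0∞)) = ⊤ := by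
  intro A
  have hA : A = nilpotentSeq := funext fun k => (single_zero_one_fin_two _).symm
  have hdiag := iSup_cube_mul_nnnorm_diag_sub_nilpotentSeq
  rw [hA]
  exact ⟨Lsem_nilpotentSeq, hdiag, by rw [hdiag]; exact sup_top_eq _⟩
end

section
/- Let A be a unital complex C*-algebra and N : A → [0,∞] a function such that: D = {x ∈ A : N(x) < ∞} is a linear subspace containing 1 on which N is a norm (subadditive, N(λx) = |λ|N(x), N(x) = 0 ⟹ x = 0), N(x*) = N(x) for all x, the set {x : N(x) ≤ 1} is compact in the norm of A, and the smallest closed *-subalgebra of A containing D is A itself. Define ε(r) = sup_{N(x) ≤ 1} inf_{N(y) ≤ r} ‖y − x*x‖ for r ≥ 0. Then D is norm-dense in A if and only if ε(r) → 0 as r → ∞. -/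
/-!
With `K = {star x * x : N x ≤ 1}` (compact) and `ε(r) = sup_{z ∈ K} infEDist z {N ≤ r}`, a
directed-cover argument shows `ε(r) → 0` iff `K ⊆ closure D`. Density gives this inclusion.
Conversely, rescaling by the homogeneity of `N` yields `star x * x ∈ closure D` for all `x ∈ D`,
and by continuity for all `x ∈ closure D`. Polarization writes `star u * v` as a combination of
four elements `star w * w`, so `closure D` is a closed *-subalgebra containing `D`, hence `A`.
-/

open Filter Set Metric
open scoped ENNReal NNReal Topology

section StarAlgebra

variable {A : Type*} [Ring A] [StarRing A] [Algebra ℂ A]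

theorem star_mul_polarization [StarModule ℂ A] (u v : A) :
    star u * v = (4 : ℂ)⁻¹ • (star (v + u) * (v + u)
      + Complex.I • (star (v + Complex.I • u) * (v + Complex.I • u))
      - star (v - u) * (v - u)
      - Complex.I • (star (v - Complex.I • u) * (v - Complex.I • u))) := by
  simp only [star_add, star_sub, star_smul, mul_add, add_mul, sub_mul, mul_sub,
    smul_mul_assoc, mul_smul_comm, smul_smul, smul_add, smul_sub, Complex.star_def,
    Complex.conj_I]
  match_scalars <;> ring_nf <;> simp only [Complex.I_sq] <;> ring

theorem Submodule.mul_mem_of_star_mul_self_mem [StarModule ℂ A] (S : Submodule ℂ A)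
    (hstar : ∀ x ∈ S, star x ∈ S) (hsq : ∀ x ∈ S, star x * x ∈ S) {a b : A}
    (ha : a ∈ S) (hb : b ∈ S) : a * b ∈ S := by
  have ha' : star a ∈ S := hstar a ha
  rw [← star_star a, star_mul_polarization]
  refine S.smul_mem _ (S.sub_mem (S.sub_mem (S.add_mem ?_ (S.smul_mem _ ?_)) ?_)
    (S.smul_mem _ ?_)) <;> apply hsq
  · exact S.add_mem hb ha'
  · exact S.add_mem hb (S.smul_mem _ ha')
  · exact S.sub_mem hb ha'
  · exact S.sub_mem hb (S.smul_mem _ ha')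

variable [TopologicalSpace A] [IsTopologicalRing A] [ContinuousStar A] [ContinuousConstSMul ℂ A]

theorem Submodule.star_mem_topologicalClosure {S : Submodule ℂ A}
    (hstar : ∀ x ∈ S, star x ∈ S) {x : A} (hx : x ∈ S.topologicalClosure) :
    star x ∈ S.topologicalClosure :=
  map_mem_closure (t := (S : Set A)) continuous_star hx hstar

theorem Submodule.star_mul_self_mem_topologicalClosure {S : Submodule ℂ A}
    (hsq : ∀ x ∈ S, star x * x ∈ S.topologicalClosure) {x : A}
    (hx : x ∈ S.topologicalClosure) : star x * x ∈ S.topologicalClosure := by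
  have h := map_mem_closure (f := fun y : A => star y * y) (t := closure (S : Set A))
    (by fun_prop) hx hsq
  rwa [closure_closure] at h

def Submodule.topologicalClosureStarSubalgebra [StarModule ℂ A] (S : Submodule ℂ A)
    (hone : 1 ∈ S) (hstar : ∀ x ∈ S, star x ∈ S)
    (hsq : ∀ x ∈ S, star x * x ∈ S.topologicalClosure) :
    StarSubalgebra ℂ A where
  toSubalgebra := S.topologicalClosure.toSubalgebra (S.le_topologicalClosure hone)
    fun _ _ ha hb => S.topologicalClosure.mul_mem_of_star_mul_self_mem
      (fun _ => S.star_mem_topologicalClosure hstar)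
      (fun _ => S.star_mul_self_mem_topologicalClosure hsq) ha hb
  star_mem' := S.star_mem_topologicalClosure hstar

end StarAlgebra

theorem tendsto_iSup_infEDist_atTop_nhds_zero_iff {α X ι : Type*} [PseudoEMetricSpace X]
    [Preorder ι] [IsDirected ι (· ≤ ·)] [Nonempty ι] {S : ι → Set X} (hS : Monotone S)
    {g : α → X} (hg : IsCompact (range g)) :
    Tendsto (fun i => ⨆ a, infEDist (g a) (S i)) atTop (𝓝 0) ↔
      ∀ a, g a ∈ closure (⋃ i, S i) := by
  constructor
  · intro h a
    rw [mem_closure_iff_infEDist_zero, infEDist_iUnion, ← nonpos_iff_eq_zero]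
    exact ge_of_tendsto' h fun i =>
      (iInf_le _ i).trans (le_iSup (fun a => infEDist (g a) (S i)) a)
  · intro h
    rw [ENNReal.tendsto_nhds_zero]
    intro ε hε
    have hcover : range g ⊆ ⋃ i, {z | infEDist z (S i) < ε} := by
      rintro _ ⟨a, rfl⟩
      have h0 : infEDist (g a) (⋃ i, S i) = 0 := mem_closure_iff_infEDist_zero.1 (h a)
      rw [infEDist_iUnion] at h0
      exact mem_iUnion.2 (iInf_lt_iff.1 (h0 ▸ hε))
    obtain ⟨i₀, hi₀⟩ := hg.elim_directed_cover _
      (fun i => isOpen_lt continuous_infEDist continuous_const) hcover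
      (Monotone.directed_le fun i j hij z hz => (infEDist_anti (hS hij)).trans_lt hz)
    filter_upwards [eventually_ge_atTop i₀] with i hi
    exact iSup_le fun a => ((infEDist_anti (hS hi)).trans_lt (hi₀ ⟨a, rfl⟩)).le

theorem iInf_subtype_nnnorm_sub_eq_infEDist {E : Type*} [SeminormedAddCommGroup E]
    (p : E → Prop) (z : E) :
    ⨅ y : {y : E // p y}, (‖y.1 - z‖₊ : ℝ≥0∞) = infEDist z {y | p y} := by
  simp only [infEDist, iInf_subtype', edist_comm z, edist_eq_enorm_sub, enorm_eq_nnnorm]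
  rfl

theorem iUnion_setOf_le_coe {X : Type*} (N : X → ℝ≥0∞) :
    ⋃ r : ℝ≥0, {x | N x ≤ r} = {x | N x < ⊤} := by
  ext x
  simp only [mem_iUnion, mem_ofPred_eq]
  exact ⟨fun ⟨r, hr⟩ => hr.trans_lt ENNReal.coe_lt_top,
    fun hx => ⟨(N x).toNNReal, (ENNReal.coe_toNNReal hx.ne).ge⟩⟩

section LipschitzElements

variable {A : Type*} [NormedRing A] [NormedAlgebra ℂ A] (N : A → ℝ≥0∞)

def lipschitzSubmodule (hadd : ∀ x y : A, N (x + y) ≤ N x + N y)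
    (hsmul : ∀ (c : ℂ) (x : A), N (c • x) = (‖c‖₊ : ℝ≥0∞) * N x) :
    Submodule ℂ A where
  carrier := {x | N x < ⊤}
  add_mem' {x y} hx hy := (hadd x y).trans_lt (ENNReal.add_lt_top.2 ⟨hx, hy⟩)
  zero_mem' := by
    have h0 : N 0 = 0 := by simpa using hsmul 0 0
    simp [h0]
  smul_mem' c x hx := (hsmul c x).trans_lt (ENNReal.mul_lt_top ENNReal.coe_lt_top hx)

variable [StarRing A] [StarModule ℂ A]
  {hadd : ∀ x y : A, N (x + y) ≤ N x + N y}
  {hsmul : ∀ (c : ℂ) (x : A), N (c • x) = (‖c‖₊ : ℝ≥0∞) * N x}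

theorem star_mul_self_mem_topologicalClosure_lipschitzSubmodule
    (hball : ∀ x, N x ≤ 1 → star x * x ∈ closure {x | N x < ⊤}) {x : A}
    (hx : x ∈ lipschitzSubmodule N hadd hsmul) :
    star x * x ∈ (lipschitzSubmodule N hadd hsmul).topologicalClosure := by
  set s : ℝ≥0 := (N x).toNNReal + 1
  have hs : s ≠ 0 := by positivity
  have hy : N ((s : ℂ)⁻¹ • x) ≤ 1 := by
    have hNx : N x ≤ s := by
      rw [← ENNReal.coe_toNNReal hx.ne]
      exact_mod_cast le_add_of_nonneg_right zero_le_one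
    calc N ((s : ℂ)⁻¹ • x) = (s⁻¹ : ℝ≥0) * N x := by simp [hsmul]
      _ ≤ (s⁻¹ : ℝ≥0) * s := by gcongr
      _ = 1 := by rw [← ENNReal.coe_mul, inv_mul_cancel₀ hs, ENNReal.coe_one]
  have hxy : star x * x = (s : ℂ) ^ 2 • (star ((s : ℂ)⁻¹ • x) * ((s : ℂ)⁻¹ • x)) := by
    have hs' : (s : ℂ) ≠ 0 := by exact_mod_cast hs
    rw [star_smul, smul_mul_smul_comm, smul_smul, Complex.star_def, map_inv₀,
      Complex.conj_ofReal, show (s : ℂ) ^ 2 * ((s : ℂ)⁻¹ * (s : ℂ)⁻¹) = 1 by field_simp,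
      one_smul]
  rw [hxy]
  exact Submodule.smul_mem _ _ (hball _ hy)

end LipschitzElements

theorem stmt16_general {A : Type*} [NormedRing A] [StarRing A] [CStarRing A] [NormedAlgebra ℂ A]
    [StarModule ℂ A]
    (N : A → ℝ≥0∞)
    (hadd : ∀ x y : A, N (x + y) ≤ N x + N y)
    (hsmul : ∀ (c : ℂ) (x : A), N (c • x) = (‖c‖₊ : ℝ≥0∞) * N x)
    (hone : N 1 < ⊤)
    (hstar : ∀ x : A, N (star x) = N x)
    (hcompact : IsCompact {x : A | N x ≤ 1})
    (hgen : ∀ B : StarSubalgebra ℂ A, IsClosed (B : Set A) →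
      {x : A | N x < ⊤} ⊆ (B : Set A) → B = ⊤) :
    Dense {x : A | N x < ⊤} ↔
      Filter.Tendsto
        (fun r : ℝ≥0 => ⨆ x : {x : A // N x ≤ 1},
          ⨅ y : {y : A // N y ≤ (r : ℝ≥0∞)}, (‖y.1 - star x.1 * x.1‖₊ : ℝ≥0∞))
        Filter.atTop (nhds 0) := by
  have : CompactSpace {x : A // N x ≤ 1} := isCompact_iff_compactSpace.1 hcompact
  simp only [iInf_subtype_nnnorm_sub_eq_infEDist]
  rw [tendsto_iSup_infEDist_atTop_nhds_zero_iff
    (fun r s hrs x hx => hx.trans (ENNReal.coe_le_coe.2 hrs)) (isCompact_range (by fun_prop)),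
    iUnion_setOf_le_coe]
  refine ⟨fun hdense x => hdense _, fun hball => ?_⟩
  let D := lipschitzSubmodule N hadd hsmul
  have hB := hgen
    (D.topologicalClosureStarSubalgebra hone (fun x hx => (hstar x).trans_lt hx)
      fun _ => star_mul_self_mem_topologicalClosure_lipschitzSubmodule N
        (fun x hx => hball ⟨x, hx⟩))
    D.isClosed_topologicalClosure D.le_topologicalClosure
  rw [dense_iff_closure_eq]
  exact congrArg ((↑) : StarSubalgebra ℂ A → Set A) hB

/-- Let `A` be a unital complex C*-algebra and `N : A → [0,∞]` a
Lip-norm: finite on a linear subspace `D = {x : N x < ∞}` containing `1`, on which it is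
a norm (subadditive, absolutely homogeneous, definite), star-invariant, with compact unit
ball `{x : N x ≤ 1}`, and such that the smallest closed *-subalgebra of `A` containing
`D` is `A` itself.  With `ε(r) = sup_{N(x) ≤ 1} inf_{N(y) ≤ r} ‖y − x*x‖`, the Lipschitz
elements `D` are dense in `A` if and only if `ε(r) → 0` as `r → ∞`. -/
theorem stmt16 {A : Type*} [NormedRing A] [StarRing A] [CStarRing A] [NormedAlgebra ℂ A]
    [CompleteSpace A] [StarModule ℂ A]
    (N : A → ℝ≥0∞)
    (hadd : ∀ x y : A, N (x + y) ≤ N x + N y)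
    (hsmul : ∀ (c : ℂ) (x : A), N (c • x) = (‖c‖₊ : ℝ≥0∞) * N x)
    (hdef : ∀ x : A, N x = 0 → x = 0)
    (hone : N 1 < ⊤)
    (hstar : ∀ x : A, N (star x) = N x)
    (hcompact : IsCompact {x : A | N x ≤ 1})
    (hgen : ∀ B : StarSubalgebra ℂ A, IsClosed (B : Set A) →
      {x : A | N x < ⊤} ⊆ (B : Set A) → B = ⊤) :
    Dense {x : A | N x < ⊤} ↔
      Filter.Tendsto
        (fun r : ℝ≥0 => ⨆ x : {x : A // N x ≤ 1},
          ⨅ y : {y : A // N y ≤ (r : ℝ≥0∞)}, (‖y.1 - star x.1 * x.1‖₊ : ℝ≥0∞))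
        Filter.atTop (nhds 0) :=
  stmt16_general N hadd hsmul hone hstar hcompact hgen
end

section
/- Let A be a unital complex C*-algebra and N : A → [0,∞] a function such that: N is a norm on D = {x : N(x) < ∞} (subadditive, N(λx) = |λ|N(x), N(x) = 0 ⟹ x = 0), N(x*) = N(x) for all x, there is R > 0 with ‖x‖ ≤ R·N(x) for all x ∈ A, and for each r ≥ 0 the set {x : N(x) ≤ r} is norm-closed in A. Define ε(r) = sup_{N(x) ≤ 1} inf_{N(y) ≤ r} ‖y − x*x‖. Then the following are equivalent: (i) there exists a constant C > 0 such that N(ab) ≤ C·N(a)·N(b) for all a, b ∈ A; (ii) ε(r₀) = 0 for some r₀ ≥ 0. -/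
open scoped ENNReal NNReal

/-!
(i) ⇒ (ii) with `r₀ = C`: `x*x` itself has `N(x*x) ≤ C` when `N x ≤ 1`.

(ii) ⇒ (i): `ε(r₀) = 0` puts `x*x` in the closure of `{N ≤ r₀}`, which is closed, so
`N(x*x) ≤ r₀` on the unit ball of `N`. The polarization identity
`x*y = ∑ₖ iᵏ (½(y + iᵏx))*(½(y + iᵏx))` writes a product of two unit-ball elements as a sum of
four such squares, so `N(ab) ≤ 4r₀` there, and homogeneity of `N` gives
`N(ab) ≤ (4r₀ + 1) N(a) N(b)` everywhere.
-/

open Complex in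
theorem star_mul_eq_sum_polarization {A : Type*} [Ring A] [StarRing A] [Algebra ℂ A]
    [StarModule ℂ A] (x y : A) :
    star x * y = ∑ k ∈ Finset.range 4, I ^ k •
      (star ((2⁻¹ : ℂ) • (y + I ^ k • x)) * ((2⁻¹ : ℂ) • (y + I ^ k • x))) := by
  simp only [Finset.sum_range_succ, Finset.sum_range_zero, star_add, star_smul, add_mul, mul_add,
    smul_mul_assoc, mul_smul_comm, smul_smul, smul_add, Complex.star_def]
  match_scalars <;> simp [pow_succ, map_ofNat] <;> grind [I_mul_I]

theorem Metric.iInf_nnnorm_sub_eq_infEDist {E : Type*} [SeminormedAddCommGroup E] (p : E → Prop)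
    (z : E) : ⨅ y : {y // p y}, (‖(y : E) - z‖₊ : ℝ≥0∞) = infEDist z {y | p y} := by
  rw [infEDist, iInf_subtype']
  simp only [edist_nndist, nndist_comm z, nndist_eq_nnnorm_sub]
  rfl

section HomogeneousFunction

variable {A : Type*} [NormedRing A] [NormedAlgebra ℂ A] {N : A → ℝ≥0∞}

theorem map_zero_of_smul (hsmul : ∀ (c : ℂ) (x : A), N (c • x) = ‖c‖₊ * N x) : N 0 = 0 := by
  simpa using hsmul 0 0

theorem exists_smul_eq_of_ne_zero_of_ne_top (hsmul : ∀ (c : ℂ) (x : A), N (c • x) = ‖c‖₊ * N x)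
    {x : A} (h0 : N x ≠ 0) (htop : N x ≠ ⊤) :
    ∃ (c : ℂ) (u : A), x = c • u ∧ (‖c‖₊ : ℝ≥0∞) = N x ∧ N u = 1 := by
  have hnorm : (‖((N x).toNNReal : ℂ)‖₊ : ℝ≥0∞) = N x := by simp [htop]
  have hne : ((N x).toNNReal : ℂ) ≠ 0 := by simp [ENNReal.toNNReal_eq_zero_iff, h0, htop]
  refine ⟨(N x).toNNReal, ((N x).toNNReal : ℂ)⁻¹ • x, by simp [smul_smul, hne], hnorm, ?_⟩
  rw [hsmul, nnnorm_inv, ENNReal.coe_inv (by simpa using hne), hnorm,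
    ENNReal.inv_mul_cancel h0 htop]

theorem le_mul_mul_of_forall_le_one (hsmul : ∀ (c : ℂ) (x : A), N (c • x) = ‖c‖₊ * N x)
    (hdef : ∀ x : A, N x = 0 → x = 0) {K : ℝ≥0} (hK : 0 < K)
    (h : ∀ a b : A, N a ≤ 1 → N b ≤ 1 → N (a * b) ≤ K) (a b : A) :
    N (a * b) ≤ K * N a * N b := by
  have hK' : (K : ℝ≥0∞) ≠ 0 := by exact_mod_cast hK.ne'
  rcases eq_or_ne (N a) 0 with ha0 | ha0
  · simp [hdef a ha0, map_zero_of_smul hsmul]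
  rcases eq_or_ne (N b) 0 with hb0 | hb0
  · simp [hdef b hb0, map_zero_of_smul hsmul]
  rcases eq_or_ne (N a) ⊤ with hat | hat
  · simp [hat, ENNReal.mul_top hK', ENNReal.top_mul hb0]
  rcases eq_or_ne (N b) ⊤ with hbt | hbt
  · simp [hbt, ENNReal.mul_top (mul_ne_zero hK' ha0)]
  obtain ⟨c, u, rfl, hc, hu⟩ := exists_smul_eq_of_ne_zero_of_ne_top hsmul ha0 hat
  obtain ⟨d, v, rfl, hd, hv⟩ := exists_smul_eq_of_ne_zero_of_ne_top hsmul hb0 hbt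
  calc N (c • u * d • v) = ‖c‖₊ * ‖d‖₊ * N (u * v) := by
        rw [smul_mul_smul_comm, hsmul, nnnorm_mul, ENNReal.coe_mul]
    _ ≤ ‖c‖₊ * ‖d‖₊ * K := by gcongr; exact h u v hu.le hv.le
    _ = K * N (c • u) * N (d • v) := by rw [← hc, ← hd]; ring

variable [StarRing A] [StarModule ℂ A]

open Complex in
theorem mul_le_of_star_mul_self_le (hadd : ∀ x y : A, N (x + y) ≤ N x + N y)
    (hsmul : ∀ (c : ℂ) (x : A), N (c • x) = ‖c‖₊ * N x) (hstar : ∀ x : A, N (star x) = N x)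
    {r : ℝ≥0∞} (h : ∀ x : A, N x ≤ 1 → N (star x * x) ≤ r) {a b : A} (ha : N a ≤ 1)
    (hb : N b ≤ 1) : N (a * b) ≤ 4 * r := by
  set w : ℕ → A := fun k => (2⁻¹ : ℂ) • (b + I ^ k • star a)
  have hw : ∀ k, N (w k) ≤ 1 := fun k => by
    calc N (w k) ≤ 2⁻¹ * (N b + N (star a)) := by
          rw [hsmul]; gcongr
          · simp
          · exact (hadd _ _).trans_eq (by simp [hsmul])
      _ ≤ 2⁻¹ * (1 + 1) := by rw [hstar]; gcongr
      _ = 1 := by rw [one_add_one_eq_two, ENNReal.inv_mul_cancel two_ne_zero ENNReal.ofNat_ne_top]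
  calc N (a * b) = N (∑ k ∈ Finset.range 4, I ^ k • (star (w k) * w k)) := by
        rw [← star_mul_eq_sum_polarization, star_star]
    _ ≤ ∑ k ∈ Finset.range 4, N (I ^ k • (star (w k) * w k)) :=
        Finset.le_sum_of_subadditive N (map_zero_of_smul hsmul).le hadd _ _
    _ ≤ ∑ _k ∈ Finset.range 4, r := Finset.sum_le_sum fun k _ => by simpa [hsmul] using h _ (hw k)
    _ = 4 * r := by simp

end HomogeneousFunction

theorem stmt17_general {A : Type*} [NormedRing A] [StarRing A] [NormedAlgebra ℂ A]
    [StarModule ℂ A]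
    (N : A → ℝ≥0∞)
    (hadd : ∀ x y : A, N (x + y) ≤ N x + N y)
    (hsmul : ∀ (c : ℂ) (x : A), N (c • x) = (‖c‖₊ : ℝ≥0∞) * N x)
    (hdef : ∀ x : A, N x = 0 → x = 0)
    (hstar : ∀ x : A, N (star x) = N x)
    (hclosed : ∀ r : ℝ≥0, IsClosed {x : A | N x ≤ (r : ℝ≥0∞)}) :
    (∃ C : ℝ≥0, 0 < C ∧ ∀ a b : A, N (a * b) ≤ (C : ℝ≥0∞) * N a * N b) ↔
      (∃ r₀ : ℝ≥0, (⨆ x : {x : A // N x ≤ 1},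
        ⨅ y : {y : A // N y ≤ (r₀ : ℝ≥0∞)}, (‖y.1 - star x.1 * x.1‖₊ : ℝ≥0∞)) = 0) := by
  constructor
  · rintro ⟨C, -, hC⟩
    refine ⟨C, ENNReal.iSup_eq_zero.2 fun x => nonpos_iff_eq_zero.1 ?_⟩
    refine iInf_le_of_le ⟨star x.1 * x.1, ?_⟩ (by simp)
    calc N (star x.1 * x.1) ≤ C * N x.1 * N x.1 := by simpa [hstar] using hC (star x.1) x.1
      _ ≤ C * 1 * 1 := by gcongr <;> exact x.2
      _ = C := by simp
  · rintro ⟨r₀, hr⟩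
    have hsq : ∀ x : A, N x ≤ 1 → N (star x * x) ≤ r₀ := fun x hx => by
      have hx := ENNReal.iSup_eq_zero.1 hr ⟨x, hx⟩
      rw [Metric.iInf_nnnorm_sub_eq_infEDist (fun y => N y ≤ r₀)] at hx
      exact (hclosed r₀).closure_subset (Metric.mem_closure_iff_infEDist_zero.2 hx)
    refine ⟨4 * r₀ + 1, by positivity,
      le_mul_mul_of_forall_le_one hsmul hdef (by positivity) fun a b ha hb => ?_⟩
    calc N (a * b) ≤ 4 * r₀ := mul_le_of_star_mul_self_le hadd hsmul hstar hsq ha hb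
      _ ≤ ↑(4 * r₀ + 1) := by push_cast; exact le_self_add

/-- Let `A` be a unital complex C*-algebra and `N : A → [0,∞]`
subadditive, absolutely homogeneous and definite on `D = {x : N x < ∞}`,
star-invariant, with `‖x‖ ≤ R·N(x)` for some `R > 0` and all `x`, and such that each
sublevel set `{x : N x ≤ r}` is norm-closed.  With
`ε(r) = sup_{N(x) ≤ 1} inf_{N(y) ≤ r} ‖y − x*x‖`, the following are equivalent:
(i) there is a constant `C > 0` with `N(ab) ≤ C·N(a)·N(b)` for all `a, b ∈ A`;
(ii) `ε(r₀) = 0` for some `r₀ ≥ 0`. -/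
theorem stmt17 {A : Type*} [NormedRing A] [StarRing A] [CStarRing A] [NormedAlgebra ℂ A]
    [CompleteSpace A] [StarModule ℂ A]
    (N : A → ℝ≥0∞)
    (hadd : ∀ x y : A, N (x + y) ≤ N x + N y)
    (hsmul : ∀ (c : ℂ) (x : A), N (c • x) = (‖c‖₊ : ℝ≥0∞) * N x)
    (hdef : ∀ x : A, N x = 0 → x = 0)
    (hstar : ∀ x : A, N (star x) = N x)
    (hR : ∃ R : ℝ≥0, 0 < R ∧ ∀ x : A, (‖x‖₊ : ℝ≥0∞) ≤ (R : ℝ≥0∞) * N x)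
    (hclosed : ∀ r : ℝ≥0, IsClosed {x : A | N x ≤ (r : ℝ≥0∞)}) :
    (∃ C : ℝ≥0, 0 < C ∧ ∀ a b : A, N (a * b) ≤ (C : ℝ≥0∞) * N a * N b) ↔
      (∃ r₀ : ℝ≥0, (⨆ x : {x : A // N x ≤ 1},
        ⨅ y : {y : A // N y ≤ (r₀ : ℝ≥0∞)}, (‖y.1 - star x.1 * x.1‖₊ : ℝ≥0∞)) = 0) :=
  stmt17_general N hadd hsmul hdef hstar hclosed
end

section
/- Let ψ : M₂(ℂ) → M₂(ℂ) be a linear map which is completely positive, i.e. for every n ≥ 1 and every matrix (x_{ij})_{i,j=1}^n with entries x_{ij} ∈ M₂(ℂ) that is positive semidefinite when regarded as a 2n×2n complex matrix, the matrix (ψ(x_{ij}))_{i,j=1}^n is positive semidefinite as a 2n×2n complex matrix. If ψ(x) = x for every x ∈ C₀, i.e. for every 2×2 matrix whose two diagonal entries are equal, then ψ(x) = x for every x ∈ M₂(ℂ). -/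
/-!
Complete positivity applied to the Choi matrix `(E_ij)` of the identity shows that the Choi
matrix `(ψ E_ij)` is positive semidefinite. As `ψ` fixes `1`, `E₀₁` and `E₁₀`, it has the form
`[[A, E₀₁], [E₁₀, 1 - A]]` with `A = ψ E₀₀`. Its diagonal gives `A₁₁ ≥ 0` and `A₀₀ ≤ 1`, while
testing it against `e₀ ⊗ e₀ - e₁ ⊗ e₁` gives `2 ≤ A₀₀ + 1 - A₁₁`; hence `A₀₀ = 1`, `A₁₁ = 0`,
and a vanishing diagonal entry of a positive semidefinite matrix kills its row and column, so
`A = E₀₀`. Finally `M₂(ℂ) = C₀ + ℂ E₀₀`.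
-/

open scoped ComplexOrder

namespace Matrix

variable {n R : Type*} [Fintype n] [DecidableEq n]

theorem PosSemidef.apply_add_apply_le [Ring R] [PartialOrder R] [IsOrderedAddMonoid R]
    [StarRing R] {M : Matrix n n R} (hM : M.PosSemidef) (i j : n) :
    M i j + M j i ≤ M i i + M j j := by
  have h := hM.dotProduct_mulVec_nonneg (Pi.single i 1 - Pi.single j 1)
  simp only [star_sub, Pi.star_single, star_one, mulVec_sub, mulVec_single, MulOpposite.op_one,
    one_smul, dotProduct_sub, sub_dotProduct, single_dotProduct, col_apply, one_mul, sub_nonneg,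
    tsub_le_iff_right] at h
  calc M i j + M j i ≤ M i i - M j i + M j j + M j i := by gcongr
    _ = M i i + M j j := by abel

theorem PosSemidef.apply_eq_zero_of_diag_eq_zero {𝕜 : Type*} [RCLike 𝕜] {M : Matrix n n 𝕜}
    (hM : M.PosSemidef) {i : n} (hi : M i i = 0) (j : n) : M j i = 0 := by
  have h := (hM.dotProduct_mulVec_zero_iff (Pi.single i 1)).1 (by simpa [mulVec_single_one])
  simpa [mulVec_single_one] using congrFun h j

variable {m : Type*} [Fintype m] [DecidableEq m]

def choiMatrix [Semiring R] (ψ : Matrix m m R →ₗ[R] Matrix m m R) : Matrix (m × m) (m × m) R :=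
  of fun p q => ψ (single p.1 q.1 1) p.2 q.2

theorem posSemidef_choiMatrix_id [CommRing R] [PartialOrder R] [StarRing R] [StarOrderedRing R] :
    (choiMatrix (LinearMap.id : Matrix m m R →ₗ[R] Matrix m m R)).PosSemidef := by
  convert posSemidef_vecMulVec_self_star fun p : m × m => if p.1 = p.2 then (1 : R) else 0
  ext ⟨i, k⟩ ⟨j, l⟩
  by_cases hik : i = k <;> by_cases hjl : j = l <;>
    simp [choiMatrix, single_apply, vecMulVec_apply, hik, hjl]

end Matrix

open Matrix

theorem map_single_zero_zero_eq_of_posSemidef_choiMatrix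
    (ψ : Matrix (Fin 2) (Fin 2) ℂ →ₗ[ℂ] Matrix (Fin 2) (Fin 2) ℂ)
    (hC : (choiMatrix ψ).PosSemidef)
    (hid : ∀ x : Matrix (Fin 2) (Fin 2) ℂ, x 0 0 = x 1 1 → ψ x = x) :
    ψ (single 0 0 1) = single 0 0 1 := by
  set A := ψ (single 0 0 1)
  have hE01 : ψ (single 0 1 1) = single 0 1 1 := hid _ (by simp)
  have hE10 : ψ (single 1 0 1) = single 1 0 1 := hid _ (by simp)
  have hE11 : ψ (single 1 1 1) = 1 - A := by
    have h1 : (single 1 1 1 : Matrix (Fin 2) (Fin 2) ℂ) = 1 - single 0 0 1 := by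
      ext i j; fin_cases i <;> fin_cases j <;> simp
    rw [h1, map_sub, hid 1 (by simp)]
  have hA11 : 0 ≤ A 1 1 := hC.diag_nonneg (i := (0, 1))
  have hA00 : 0 ≤ 1 - A 0 0 := by
    simpa [choiMatrix, hE11] using hC.diag_nonneg (i := (1, 0))
  have hsum : 1 + 1 ≤ A 0 0 + (1 - A 1 1) := by
    simpa [choiMatrix, hE01, hE10, hE11] using hC.apply_add_apply_le (0, 0) (1, 1)
  have hle : (1 - A 0 0) + A 1 1 ≤ 0 := by linear_combination hsum
  obtain ⟨h00, h11⟩ :=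
    (add_eq_zero_iff_of_nonneg hA00 hA11).1 (hle.antisymm (add_nonneg hA00 hA11))
  rw [sub_eq_zero] at h00
  have h01 : A 0 1 = 0 := hC.apply_eq_zero_of_diag_eq_zero (i := (0, 1)) h11 (0, 0)
  have h10 : A 1 0 = 0 := by
    simpa [choiMatrix, A, h01] using (hC.isHermitian.apply (0, 1) (0, 0)).symm
  ext i j; fin_cases i <;> fin_cases j <;> simp [← h00, h01, h10, h11]

/-- Let `ψ : M₂(ℂ) → M₂(ℂ)` be a completely positive linear map (for
every `n` and every `n×n` matrix `(x_{ij})` of `2×2` blocks which is positive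
semidefinite as a `2n×2n` complex matrix, the blockwise image `(ψ(x_{ij}))` is positive
semidefinite).  If `ψ` is the identity on the operator system `C₀` of `2×2` matrices
with equal diagonal entries, then `ψ` is the identity on all of `M₂(ℂ)`. -/
theorem stmt18 (ψ : Matrix (Fin 2) (Fin 2) ℂ →ₗ[ℂ] Matrix (Fin 2) (Fin 2) ℂ)
    (hcp : ∀ (n : ℕ) (x : Fin n → Fin n → Matrix (Fin 2) (Fin 2) ℂ),
      (Matrix.of fun p q : Fin n × Fin 2 => x p.1 q.1 p.2 q.2).PosSemidef →
      (Matrix.of fun p q : Fin n × Fin 2 => ψ (x p.1 q.1) p.2 q.2).PosSemidef)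
    (hid : ∀ x : Matrix (Fin 2) (Fin 2) ℂ, x 0 0 = x 1 1 → ψ x = x) :
    ∀ x : Matrix (Fin 2) (Fin 2) ℂ, ψ x = x := by
  intro x
  have hE := map_single_zero_zero_eq_of_posSemidef_choiMatrix ψ
    (hcp 2 (fun i j => single i j 1) posSemidef_choiMatrix_id) hid
  set c := x 0 0 - x 1 1
  have hy : ψ (x - c • single 0 0 1) = x - c • single 0 0 1 := hid _ (by simp [c])
  calc ψ x = ψ (x - c • single 0 0 1) + c • ψ (single 0 0 1) := by
        rw [← map_smul, ← map_add, sub_add_cancel]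
    _ = x := by rw [hy, hE, sub_add_cancel]
end
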